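/- arXiv:1003.1602 — 13 statements merged into one kernel-verified Lean document; each statement's English description precedes it below -/
import Mathlib

section
/- Let A ∈ L(H) have closed range with Moore–Penrose inverse A⁺, and let X, Y ∈ L(K,H) with R(X) ⊆ R(A) and R(Y) ⊆ R(A*). Then (A − XY*) A⁺ (A − XY*) = A − XY* if and only if X Y* A⁺ X Y* = X Y*. -/
open ContinuousLinearMap

/-- Let `A ∈ L(H)` have closed range with Moore–Penrose inverse `A⁺` (denoted `Ap`),
and let `X, Y ∈ L(K,H)` with `R(X) ⊆ R(A)` and `R(Y) ⊆ R(A*)`. Then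
`(A − XY*) A⁺ (A − XY*) = A − XY*` iff `X Y* A⁺ X Y* = X Y*`. -/
theorem sub_AplusSub_eq_iff
    {H K : Type*}
    [NormedAddCommGroup H] [InnerProductSpace ℂ H] [CompleteSpace H]
    [NormedAddCommGroup K] [InnerProductSpace ℂ K] [CompleteSpace K]
    (A Ap : H →L[ℂ] H)
    (hA : IsClosed (Set.range A))
    (h1 : A ∘L Ap ∘L A = A)
    (h2 : Ap ∘L A ∘L Ap = Ap)
    (h3 : ContinuousLinearMap.adjoint (A ∘L Ap) = A ∘L Ap)
    (h4 : ContinuousLinearMap.adjoint (Ap ∘L A) = Ap ∘L A)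
    (X Y : K →L[ℂ] H)
    (hX : Set.range X ⊆ Set.range A)
    (hY : Set.range Y ⊆ Set.range (ContinuousLinearMap.adjoint A)) :
    (A - X ∘L ContinuousLinearMap.adjoint Y) ∘L Ap ∘L (A - X ∘L ContinuousLinearMap.adjoint Y)
        = A - X ∘L ContinuousLinearMap.adjoint Y ↔
      (X ∘L ContinuousLinearMap.adjoint Y) ∘L Ap ∘L (X ∘L ContinuousLinearMap.adjoint Y)
        = X ∘L ContinuousLinearMap.adjoint Y := by
  set B := X ∘L ContinuousLinearMap.adjoint Y with hB
  -- A A⁺ X = X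
  have hAX : ∀ v, A (Ap (X v)) = X v := by
    intro v
    obtain ⟨h, hh⟩ := hX ⟨v, rfl⟩
    rw [← hh]
    have := ContinuousLinearMap.ext_iff.mp h1 h
    simpa using this
  -- A⁺ A A* = A*
  have hA' : (Ap ∘L A) ∘L ContinuousLinearMap.adjoint A = ContinuousLinearMap.adjoint A := by
    rw [← h4, ← adjoint_comp, h1]
  -- A⁺ A Y = Y
  have hYA : ∀ v, Ap (A (Y v)) = Y v := by
    intro v
    obtain ⟨h, hh⟩ := hY ⟨v, rfl⟩
    rw [← hh]
    have := ContinuousLinearMap.ext_iff.mp hA' h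
    simpa using this
  -- Y* A⁺ A = Y*
  have hYstar : ContinuousLinearMap.adjoint Y ∘L (Ap ∘L A) = ContinuousLinearMap.adjoint Y := by
    have : (Ap ∘L A) ∘L Y = Y := by ext v; simpa using hYA v
    calc ContinuousLinearMap.adjoint Y ∘L (Ap ∘L A)
        = ContinuousLinearMap.adjoint Y ∘L ContinuousLinearMap.adjoint (Ap ∘L A) := by rw [h4]
      _ = ContinuousLinearMap.adjoint ((Ap ∘L A) ∘L Y) := by rw [← adjoint_comp]
      _ = ContinuousLinearMap.adjoint Y := by rw [this]
  have k1 : A ∘L (Ap ∘L B) = B := by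
    ext v; simp [hB, hAX]
  have k2 : B ∘L (Ap ∘L A) = B := by
    rw [hB, ContinuousLinearMap.comp_assoc, hYstar]
  have expand : (A - B) ∘L (Ap ∘L (A - B))
      = A - B - B + B ∘L (Ap ∘L B) := by
    have e1 : Ap ∘L (A - B) = Ap ∘L A - Ap ∘L B := by rw [comp_sub]
    rw [e1, sub_comp, comp_sub, comp_sub, h1, k1, k2]
    abel
  rw [expand]
  constructor
  · intro h
    have h' : B ∘L (Ap ∘L B) - B = 0 := by
      have := sub_eq_zero_of_eq h
      calc B ∘L (Ap ∘L B) - B = A - B - B + B ∘L (Ap ∘L B) - (A - B) := by abel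
        _ = 0 := this
    exact sub_eq_zero.mp h'
  · intro h
    rw [h]
    abel
end

section
/- Let S ∈ L(H) be an idempotent operator (S² = S). Then the operator I − S − S* is invertible in L(H). -/
open ContinuousLinearMap
open scoped InnerProductSpace

/-- Let `S ∈ L(H)` be an idempotent operator. Then `I − S − S*` is invertible in `L(H)`. -/
theorem isUnit_one_sub_self_sub_adjoint
    {H : Type*} [NormedAddCommGroup H] [InnerProductSpace ℂ H] [CompleteSpace H]
    (S : H →L[ℂ] H) (hS : S ∘L S = S) :
    IsUnit (1 - S - ContinuousLinearMap.adjoint S) := by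
  set T : H →L[ℂ] H := ContinuousLinearMap.adjoint S with hT
  set A : H →L[ℂ] H := 1 - S - T with hA
  have h1 : S * S = S := hS
  have h2 : T * T = T := by
    rw [hT]
    change ContinuousLinearMap.adjoint S ∘L ContinuousLinearMap.adjoint S = _
    rw [← adjoint_comp, hS]
  have hTadj : ContinuousLinearMap.adjoint T = S := by
    rw [hT, adjoint_adjoint]
  have key : A * A = 1 + (S - T) * (T - S) := by
    rw [hA,
      show ((1 : H →L[ℂ] H) - S - T) * (1 - S - T)
          = 1 - S - T - S + S * S + S * T - T + T * S + T * T from by noncomm_ring,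
      show (1 : H →L[ℂ] H) + (S - T) * (T - S)
          = 1 + S * T - S * S - T * T + T * S from by noncomm_ring, h1, h2]
    abel
  rw [show A = 1 - S - ContinuousLinearMap.adjoint S from rfl] at *
  rw [← hA, ← isUnit_pow_iff (two_ne_zero), sq]
  refine isUnit_of_forall_le_norm_inner_map (𝕜 := ℂ) _ (c := 1) one_pos fun x => ?_
  have hadjST : ContinuousLinearMap.adjoint (S - T) = T - S := by
    rw [map_sub, hTadj, ← hT]
  have happ : (A * A) x = x + (S - T) ((T - S) x) := by
    rw [key]; rfl
  have hinner : ⟪(A * A) x, x⟫_ℂ = (‖x‖ : ℂ) ^ 2 + (‖(T - S) x‖ : ℂ) ^ 2 := by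
    rw [happ, inner_add_left, ← adjoint_inner_right, hadjST,
      inner_self_eq_norm_sq_to_K, inner_self_eq_norm_sq_to_K]
    norm_num
  rw [hinner]
  have : ‖((‖x‖ : ℂ) ^ 2 + (‖(T - S) x‖ : ℂ) ^ 2)‖ = ‖x‖ ^ 2 + ‖(T - S) x‖ ^ 2 := by
    rw [show ((‖x‖ : ℂ) ^ 2 + (‖(T - S) x‖ : ℂ) ^ 2)
        = ((‖x‖ ^ 2 + ‖(T - S) x‖ ^ 2 : ℝ) : ℂ) from by push_cast; ring,
      Complex.norm_real, Real.norm_of_nonneg (by positivity)]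
  rw [this, NNReal.coe_one, mul_one]
  exact le_add_of_nonneg_right (by positivity)
end

section
/- Let S ∈ L(H) be an idempotent operator (S² = S) and set P = −S(I − S − S*)⁻¹ (the inverse exists since I − S − S* is invertible). Then P is the orthogonal projection of H onto R(S); that is, P² = P, P* = P, and R(P) = R(S). -/
open ContinuousLinearMap

/-- Let `S ∈ L(H)` be idempotent and let `T` be the inverse of `I − S − S*`.
Then `P = −S T` is the orthogonal projection of `H` onto `R(S)`:
`P² = P`, `P* = P`, and `R(P) = R(S)`. -/
theorem neg_S_mul_inv_is_orthogonal_projection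
    {H : Type*} [NormedAddCommGroup H] [InnerProductSpace ℂ H] [CompleteSpace H]
    (S T : H →L[ℂ] H) (hS : S ∘L S = S)
    (hT1 : (1 - S - ContinuousLinearMap.adjoint S) ∘L T = 1)
    (hT2 : T ∘L (1 - S - ContinuousLinearMap.adjoint S) = 1) :
    (-(S ∘L T)) ∘L (-(S ∘L T)) = -(S ∘L T) ∧
      ContinuousLinearMap.adjoint (-(S ∘L T)) = -(S ∘L T) ∧
      Set.range (-(S ∘L T)) = Set.range S := by
  have hstar : ∀ X : H →L[ℂ] H, ContinuousLinearMap.adjoint X = star X :=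
    fun X => (ContinuousLinearMap.star_eq_adjoint X).symm
  have hS' : S * S = S := hS
  set A : H →L[ℂ] H := 1 - S - star S with hA
  have hT1' : A * T = 1 := by rw [hA, ← hstar]; exact hT1
  have hT2' : T * A = 1 := by rw [hA, ← hstar]; exact hT2
  -- A is self-adjoint
  have hAad : star A = A := by
    rw [hA]
    simp only [star_sub, star_one, star_star]
    abel
  -- T is self-adjoint
  have hTad : star T = T := by
    have h : star T * A = 1 := by
      have := congrArg star hT1'
      rwa [star_mul, hAad, star_one] at this
    calc star T = star T * (A * T) := by rw [hT1', mul_one]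
      _ = (star T * A) * T := by rw [mul_assoc]
      _ = T := by rw [h, one_mul]
  -- A * S = -(star S * S)
  have h1 : A * S = -(star S * S) := by
    rw [hA, sub_mul, sub_mul, one_mul, hS']; abel
  -- star S * A = A * S (take stars in h1)
  have h2 : star S * A = A * S := by
    have := congrArg star h1
    rw [star_mul, hAad, star_neg, star_mul, star_star, ← h1] at this
    exact this
  -- S * T = T * star S
  have h3 : S * T = T * star S := by
    have h : T * (star S * A) * T = T * (A * S) * T := by rw [h2]
    rw [← mul_assoc T (star S) A, mul_assoc (T * star S) A T, hT1', mul_one,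
      ← mul_assoc T A S, hT2', one_mul] at h
    exact h.symm
  -- S * T * S = -S
  have h4 : S * T * S = -S := by
    calc S * T * S = T * (star S * S) := by rw [h3, mul_assoc]
      _ = T * -(A * S) := by rw [← neg_neg (star S * S), ← h1]
      _ = -(T * A * S) := by rw [mul_neg, mul_assoc]
      _ = -S := by rw [hT2', one_mul]
  -- idempotence
  have hP2 : (S * T) * (S * T) = -(S * T) := by
    calc (S * T) * (S * T) = (S * T * S) * T := by
          rw [← mul_assoc]
      _ = -S * T := by rw [h4]
      _ = -(S * T) := by rw [neg_mul]
  refine ⟨?_, ?_, ?_⟩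
  · show (-(S * T)) * (-(S * T)) = -(S * T)
    rw [neg_mul_neg, hP2]
  · show ContinuousLinearMap.adjoint (-(S * T)) = -(S * T)
    rw [hstar, star_neg, star_mul, hTad, ← h3]
  · apply le_antisymm
    · rintro _ ⟨x, rfl⟩
      exact ⟨-(T x), by simp⟩
    · rintro _ ⟨x, rfl⟩
      refine ⟨S x, ?_⟩
      have h5 : (-(S * T)) * S = S := by rw [neg_mul, h4, neg_neg]
      calc (-(S ∘L T)) (S x) = ((-(S * T)) * S) x := rfl
        _ = S x := by rw [h5]
end

section
/- Let T, B ∈ L(H) satisfy T B T = T. Let P ∈ L(H) be a self-adjoint idempotent with R(P) = R(I − BT), and let Q ∈ L(H) be a self-adjoint idempotent with R(Q) = R(TB). Then (I − P) B Q is the Moore–Penrose inverse of T; that is, with C = (I − P) B Q one has T C T = T, C T C = C, (TC)* = TC, and (CT)* = CT. -/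
/-!
For idempotents, equal ranges means mutual left absorption: `P (1 - BT) = 1 - BT`,
`(1 - BT) P = P`, `Q (TB) = TB` and `(TB) Q = Q`, where `TB` and `1 - BT` are idempotent because
`TBT = T`. Ring algebra then gives `TC = Q` and `CT = 1 - P` for `C = (1 - P) B Q`, and Penrose's
four equations follow because `P` and `Q` are self-adjoint.
-/

open ContinuousLinearMap

structure IsMoorePenroseInverse {R : Type*} [Mul R] [Star R] (t c : R) : Prop where
  mul_mul_eq_left : t * c * t = t
  mul_mul_eq_right : c * t * c = c
  isSelfAdjoint_mul_left : IsSelfAdjoint (t * c)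
  isSelfAdjoint_mul_right : IsSelfAdjoint (c * t)

section Ring

variable {R : Type*} [Ring R] {t b : R}

theorem isIdempotentElem_mul_of_mul_mul_eq (h : t * b * t = t) : IsIdempotentElem (t * b) := by
  rw [IsIdempotentElem, ← mul_assoc, h]

theorem isIdempotentElem_one_sub_mul_of_mul_mul_eq (h : t * b * t = t) :
    IsIdempotentElem (1 - b * t) := by
  refine IsIdempotentElem.one_sub ?_
  rw [IsIdempotentElem, mul_assoc, ← mul_assoc t, h]

theorem mul_one_sub_mul_eq_zero (h : t * b * t = t) : t * (1 - b * t) = 0 := by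
  rw [mul_sub, mul_one, ← mul_assoc, h, sub_self]

variable [StarRing R] {p q : R}

theorem isMoorePenroseInverse_one_sub_mul_mul (htbt : t * b * t = t)
    (hp : IsStarProjection p) (hq : IsSelfAdjoint q)
    (hpe : p * (1 - b * t) = 1 - b * t) (hep : (1 - b * t) * p = p)
    (hqf : q * (t * b) = t * b) (hfq : t * b * q = q) :
    IsMoorePenroseInverse t ((1 - p) * b * q) := by
  have htp : t * p = 0 := by rw [← hep, ← mul_assoc, mul_one_sub_mul_eq_zero htbt, zero_mul]
  have hqt : q * t = t := by
    conv_lhs => rw [← htbt]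
    rw [← mul_assoc, hqf, htbt]
  have htc : t * ((1 - p) * b * q) = q := by
    rw [← mul_assoc, ← mul_assoc, mul_sub, mul_one, htp, sub_zero, hfq]
  have hct : (1 - p) * b * q * t = 1 - p := by
    have h : (1 - p) * (1 - b * t) = 0 := by rw [sub_mul, one_mul, hpe, sub_self]
    rw [mul_sub, mul_one, sub_eq_zero] at h
    rw [mul_assoc _ q, hqt, mul_assoc, ← h]
  refine ⟨?_, ?_, ?_, ?_⟩
  · rw [htc, hqt]
  · rw [hct, ← mul_assoc, ← mul_assoc, hp.one_sub.isIdempotentElem.eq]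
  · rw [htc]; exact hq
  · rw [hct]; exact hp.one_sub.isSelfAdjoint

end Ring

namespace ContinuousLinearMap

theorem IsIdempotentElem.comp_eq_right_of_range_subset {R M E : Type*} [Semiring R]
    [TopologicalSpace M] [AddCommMonoid M] [Module R M]
    [TopologicalSpace E] [AddCommMonoid E] [Module R E]
    {p : M →L[R] M} (hp : IsIdempotentElem p) {a : E →L[R] M}
    (h : Set.range a ⊆ Set.range p) : p ∘L a = a := by
  ext x
  obtain ⟨y, hy⟩ := h ⟨x, rfl⟩
  rw [comp_apply, ← hy]
  exact DFunLike.congr_fun hp y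

end ContinuousLinearMap

/-- Let `T, B ∈ L(H)` with `T B T = T`. Let `P` be the orthogonal projection onto
`R(I − BT)` and `Q` the orthogonal projection onto `R(TB)`. Then `(I − P) B Q` is the
Moore–Penrose inverse of `T`. -/
theorem moore_penrose_of_inner_inverse
    {H : Type*} [NormedAddCommGroup H] [InnerProductSpace ℂ H] [CompleteSpace H]
    (T B P Q : H →L[ℂ] H)
    (hTBT : T ∘L B ∘L T = T)
    (hP1 : P ∘L P = P) (hP2 : ContinuousLinearMap.adjoint P = P)
    (hP3 : Set.range P = Set.range ((1 : H →L[ℂ] H) - B ∘L T))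
    (hQ1 : Q ∘L Q = Q) (hQ2 : ContinuousLinearMap.adjoint Q = Q)
    (hQ3 : Set.range Q = Set.range (T ∘L B)) :
    T ∘L ((1 - P) ∘L B ∘L Q) ∘L T = T ∧
      ((1 - P) ∘L B ∘L Q) ∘L T ∘L ((1 - P) ∘L B ∘L Q) = (1 - P) ∘L B ∘L Q ∧
      ContinuousLinearMap.adjoint (T ∘L ((1 - P) ∘L B ∘L Q)) = T ∘L ((1 - P) ∘L B ∘L Q) ∧
      ContinuousLinearMap.adjoint (((1 - P) ∘L B ∘L Q) ∘L T) = ((1 - P) ∘L B ∘L Q) ∘L T := by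
  have htbt : T * B * T = T := by rw [mul_assoc]; exact hTBT
  have hP : IsIdempotentElem P := hP1
  have hQ : IsIdempotentElem Q := hQ1
  have h := isMoorePenroseInverse_one_sub_mul_mul htbt ⟨hP, hP2⟩ hQ2
    (hP.comp_eq_right_of_range_subset hP3.ge)
    ((isIdempotentElem_one_sub_mul_of_mul_mul_eq htbt).comp_eq_right_of_range_subset hP3.le)
    (hQ.comp_eq_right_of_range_subset hQ3.ge)
    ((isIdempotentElem_mul_of_mul_mul_eq htbt).comp_eq_right_of_range_subset hQ3.le)
  exact ⟨h.mul_mul_eq_left, h.mul_mul_eq_right, h.isSelfAdjoint_mul_left,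
    h.isSelfAdjoint_mul_right⟩
end

section
/- Let A ∈ L(H) have closed range with Moore–Penrose inverse A⁺, and let X, Y ∈ L(K,H) with R(X) ⊆ R(A) and R(Y) ⊆ R(A*). Assume I − Y* A⁺ X is invertible in L(K), and set B = A⁺ + A⁺ X (I − Y* A⁺ X)⁻¹ Y* A⁺. Then (A − XY*) B = A A⁺ and B (A − XY*) = A⁺ A. -/
/-!
Since `R(X) ⊆ R(A)` and `R(Y) ⊆ R(A*)`, the projections `AA⁺` and `A⁺A` act as the identity
on `X` and `Y` respectively, i.e. `AA⁺X = X` and `Y*A⁺A = Y*`. Given these two absorption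
identities, both products reduce to `AA⁺` and `A⁺A` by the same algebra as the classical
Sherman–Morrison–Woodbury formula, using `Y*A⁺X W = W − 1` and `W (1 − Y*A⁺X) = 1`.
-/

open ContinuousLinearMap

namespace ContinuousLinearMap

theorem comp_eq_self_of_range_subset {R M N P : Type*} [Semiring R]
    [AddCommMonoid M] [Module R M] [TopologicalSpace M]
    [AddCommMonoid N] [Module R N] [TopologicalSpace N]
    [AddCommMonoid P] [Module R P] [TopologicalSpace P]
    {E : N →L[R] N} {f : M →L[R] N} (hE : E ∘L f = f) {X : P →L[R] N}
    (hX : Set.range X ⊆ Set.range f) : E ∘L X = X := by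
  ext p
  obtain ⟨m, hm⟩ := hX (Set.mem_range_self p)
  rw [comp_apply, ← hm, ← comp_apply E f, hE]

section Woodbury

variable {R M K : Type*} [Ring R]
  [AddCommGroup M] [Module R M] [TopologicalSpace M] [IsTopologicalAddGroup M]
  [AddCommGroup K] [Module R K] [TopologicalSpace K] [IsTopologicalAddGroup K]

/-- `A⁺ + A⁺ X W Y* A⁺`, where `Yd` plays `Y*` and `W` the inverse of `1 - Y* A⁺ X`. -/
def woodbury (Ap : M →L[R] M) (X : K →L[R] M) (Yd : M →L[R] K) (W : K →L[R] K) :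
    M →L[R] M :=
  Ap + Ap ∘L X ∘L W ∘L Yd ∘L Ap

variable (A Ap : M →L[R] M) (X : K →L[R] M) (Yd : M →L[R] K) (W : K →L[R] K)

theorem sub_comp_woodbury (hX : A ∘L Ap ∘L X = X) (hW : (1 - Yd ∘L Ap ∘L X) ∘L W = 1) :
    (A - X ∘L Yd) ∘L woodbury Ap X Yd W = A ∘L Ap := by
  have hX' : ∀ k, A (Ap (X k)) = X k := fun k => congrArg (· k) hX
  have hW' : ∀ k, Yd (Ap (X (W k))) = W k - k := fun k =>
    eq_sub_of_add_eq' (sub_eq_iff_eq_add.mp (congrArg (· k) hW)).symm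
  ext x
  simp only [woodbury, sub_comp, comp_add, add_apply, sub_apply, comp_apply, hX', hW', map_sub]
  abel

theorem woodbury_comp_sub (hY : Yd ∘L Ap ∘L A = Yd) (hW : W ∘L (1 - Yd ∘L Ap ∘L X) = 1) :
    woodbury Ap X Yd W ∘L (A - X ∘L Yd) = Ap ∘L A := by
  have hY' : ∀ x, Yd (Ap (A x)) = Yd x := fun x => congrArg (· x) hY
  have hW' : ∀ k, W (k - Yd (Ap (X k))) = k := fun k => congrArg (· k) hW
  ext x
  have hApXW : Ap (X (W (Yd x))) - Ap (X (W (Yd (Ap (X (Yd x)))))) = Ap (X (Yd x)) := by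
    rw [← map_sub, ← map_sub, ← map_sub, hW']
  simp only [woodbury, comp_sub, add_comp, add_apply, sub_apply, comp_apply, hY']
  rw [add_sub_add_comm, hApXW, sub_add_cancel]

end Woodbury

section MoorePenrose

variable {𝕜 H K : Type*} [RCLike 𝕜]
  [NormedAddCommGroup H] [InnerProductSpace 𝕜 H] [CompleteSpace H]
  [NormedAddCommGroup K] [InnerProductSpace 𝕜 K] [CompleteSpace K]

theorem comp_comp_adjoint_eq_adjoint {A Ap : H →L[𝕜] H} (h1 : A ∘L Ap ∘L A = A)
    (h4 : adjoint (Ap ∘L A) = Ap ∘L A) : (Ap ∘L A) ∘L adjoint A = adjoint A :=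
  adjoint.injective <| by rw [adjoint_comp, h4, adjoint_adjoint]; exact h1

theorem adjoint_comp_comp_eq_adjoint {A Ap : H →L[𝕜] H} (h1 : A ∘L Ap ∘L A = A)
    (h4 : adjoint (Ap ∘L A) = Ap ∘L A) {Y : K →L[𝕜] H}
    (hY : Set.range Y ⊆ Set.range (adjoint A)) : adjoint Y ∘L Ap ∘L A = adjoint Y := by
  have hPY : (Ap ∘L A) ∘L Y = Y :=
    comp_eq_self_of_range_subset (comp_comp_adjoint_eq_adjoint h1 h4) hY
  simpa only [adjoint_comp, h4] using congrArg adjoint hPY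

end MoorePenrose

end ContinuousLinearMap

theorem SMW_partial_isometries_general
    {H K : Type*}
    [NormedAddCommGroup H] [InnerProductSpace ℂ H] [CompleteSpace H]
    [NormedAddCommGroup K] [InnerProductSpace ℂ K] [CompleteSpace K]
    (A Ap : H →L[ℂ] H)
    (h1 : A ∘L Ap ∘L A = A)
    (h4 : ContinuousLinearMap.adjoint (Ap ∘L A) = Ap ∘L A)
    (X Y : K →L[ℂ] H)
    (hX : Set.range X ⊆ Set.range A)
    (hY : Set.range Y ⊆ Set.range (ContinuousLinearMap.adjoint A))
    (W : K →L[ℂ] K)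
    (hW1 : (1 - (ContinuousLinearMap.adjoint Y) ∘L Ap ∘L X) ∘L W = 1)
    (hW2 : W ∘L (1 - (ContinuousLinearMap.adjoint Y) ∘L Ap ∘L X) = 1) :
    (A - X ∘L ContinuousLinearMap.adjoint Y) ∘L
        (Ap + Ap ∘L X ∘L W ∘L (ContinuousLinearMap.adjoint Y) ∘L Ap) = A ∘L Ap ∧
      (Ap + Ap ∘L X ∘L W ∘L (ContinuousLinearMap.adjoint Y) ∘L Ap) ∘L
        (A - X ∘L ContinuousLinearMap.adjoint Y) = Ap ∘L A := by
  have hAApX : A ∘L Ap ∘L X = X := comp_eq_self_of_range_subset (E := A ∘L Ap) h1 hX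
  have hYApA : adjoint Y ∘L Ap ∘L A = adjoint Y := adjoint_comp_comp_eq_adjoint h1 h4 hY
  exact ⟨sub_comp_woodbury A Ap X _ W hAApX hW1, woodbury_comp_sub A Ap X _ W hYApA hW2⟩

/-- Let `A ∈ L(H)` have closed range with Moore–Penrose inverse `A⁺` (denoted `Ap`), and
`X, Y ∈ L(K,H)` with `R(X) ⊆ R(A)`, `R(Y) ⊆ R(A*)`. Assume `I − Y* A⁺ X` is invertible in
`L(K)` with inverse `W`, and set `B = A⁺ + A⁺ X (I − Y* A⁺ X)⁻¹ Y* A⁺`. Then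
`(A − XY*) B = A A⁺` and `B (A − XY*) = A⁺ A`. -/
theorem SMW_partial_isometries
    {H K : Type*}
    [NormedAddCommGroup H] [InnerProductSpace ℂ H] [CompleteSpace H]
    [NormedAddCommGroup K] [InnerProductSpace ℂ K] [CompleteSpace K]
    (A Ap : H →L[ℂ] H)
    (hA : IsClosed (Set.range A))
    (h1 : A ∘L Ap ∘L A = A)
    (h2 : Ap ∘L A ∘L Ap = Ap)
    (h3 : ContinuousLinearMap.adjoint (A ∘L Ap) = A ∘L Ap)
    (h4 : ContinuousLinearMap.adjoint (Ap ∘L A) = Ap ∘L A)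
    (X Y : K →L[ℂ] H)
    (hX : Set.range X ⊆ Set.range A)
    (hY : Set.range Y ⊆ Set.range (ContinuousLinearMap.adjoint A))
    (W : K →L[ℂ] K)
    (hW1 : (1 - (ContinuousLinearMap.adjoint Y) ∘L Ap ∘L X) ∘L W = 1)
    (hW2 : W ∘L (1 - (ContinuousLinearMap.adjoint Y) ∘L Ap ∘L X) = 1) :
    (A - X ∘L ContinuousLinearMap.adjoint Y) ∘L
        (Ap + Ap ∘L X ∘L W ∘L (ContinuousLinearMap.adjoint Y) ∘L Ap) = A ∘L Ap ∧
      (Ap + Ap ∘L X ∘L W ∘L (ContinuousLinearMap.adjoint Y) ∘L Ap) ∘L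
        (A - X ∘L ContinuousLinearMap.adjoint Y) = Ap ∘L A :=
  SMW_partial_isometries_general A Ap h1 h4 X Y hX hY W hW1 hW2
end

section
/- Let A ∈ L(H) have closed range with Moore–Penrose inverse A⁺, and let X, Y ∈ L(K,H) with R(X) ⊆ R(A) and R(Y) ⊆ R(A*). Assume I − Y* A⁺ X is invertible in L(K). Then A − XY* has a Moore–Penrose inverse, and (A − XY*)⁺ = A⁺ + A⁺ X (I − Y* A⁺ X)⁻¹ Y* A⁺; that is, B = A⁺ + A⁺ X (I − Y* A⁺ X)⁻¹ Y* A⁺ satisfies (A−XY*)B(A−XY*) = A−XY*, B(A−XY*)B = B, ((A−XY*)B)* = (A−XY*)B, and (B(A−XY*))* = B(A−XY*). -/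
open ContinuousLinearMap

/-- Sherman–Morrison–Woodbury for Moore–Penrose inverses: if `R(X) ⊆ R(A)`,
`R(Y) ⊆ R(A*)`, and `I − Y* A⁺ X` is invertible with inverse `W`, then
`B = A⁺ + A⁺ X (I − Y* A⁺ X)⁻¹ Y* A⁺` is the Moore–Penrose inverse of `A − XY*`. -/
theorem SMW_moore_penrose
    {H K : Type*}
    [NormedAddCommGroup H] [InnerProductSpace ℂ H] [CompleteSpace H]
    [NormedAddCommGroup K] [InnerProductSpace ℂ K] [CompleteSpace K]
    (A Ap : H →L[ℂ] H)
    (hA : IsClosed (Set.range A))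
    (h1 : A ∘L Ap ∘L A = A)
    (h2 : Ap ∘L A ∘L Ap = Ap)
    (h3 : ContinuousLinearMap.adjoint (A ∘L Ap) = A ∘L Ap)
    (h4 : ContinuousLinearMap.adjoint (Ap ∘L A) = Ap ∘L A)
    (X Y : K →L[ℂ] H)
    (hX : Set.range X ⊆ Set.range A)
    (hY : Set.range Y ⊆ Set.range (ContinuousLinearMap.adjoint A))
    (W : K →L[ℂ] K)
    (hW1 : (1 - (ContinuousLinearMap.adjoint Y) ∘L Ap ∘L X) ∘L W = 1)
    (hW2 : W ∘L (1 - (ContinuousLinearMap.adjoint Y) ∘L Ap ∘L X) = 1) :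
    (A - X ∘L ContinuousLinearMap.adjoint Y) ∘L
        (Ap + Ap ∘L X ∘L W ∘L (ContinuousLinearMap.adjoint Y) ∘L Ap) ∘L
        (A - X ∘L ContinuousLinearMap.adjoint Y) = A - X ∘L ContinuousLinearMap.adjoint Y ∧
      (Ap + Ap ∘L X ∘L W ∘L (ContinuousLinearMap.adjoint Y) ∘L Ap) ∘L
        (A - X ∘L ContinuousLinearMap.adjoint Y) ∘L
        (Ap + Ap ∘L X ∘L W ∘L (ContinuousLinearMap.adjoint Y) ∘L Ap)
        = Ap + Ap ∘L X ∘L W ∘L (ContinuousLinearMap.adjoint Y) ∘L Ap ∧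
      ContinuousLinearMap.adjoint ((A - X ∘L ContinuousLinearMap.adjoint Y) ∘L
          (Ap + Ap ∘L X ∘L W ∘L (ContinuousLinearMap.adjoint Y) ∘L Ap))
        = (A - X ∘L ContinuousLinearMap.adjoint Y) ∘L
          (Ap + Ap ∘L X ∘L W ∘L (ContinuousLinearMap.adjoint Y) ∘L Ap) ∧
      ContinuousLinearMap.adjoint ((Ap + Ap ∘L X ∘L W ∘L (ContinuousLinearMap.adjoint Y) ∘L Ap) ∘L
          (A - X ∘L ContinuousLinearMap.adjoint Y))
        = (Ap + Ap ∘L X ∘L W ∘L (ContinuousLinearMap.adjoint Y) ∘L Ap) ∘L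
          (A - X ∘L ContinuousLinearMap.adjoint Y) := by

  set Y' := ContinuousLinearMap.adjoint Y with hY'
  -- pointwise versions of hypotheses
  have p1 : ∀ v : H, A (Ap (A v)) = A v := by
    intro v
    have := DFunLike.congr_fun h1 v
    simpa using this
  have p2 : ∀ v : H, Ap (A (Ap v)) = Ap v := by
    intro v
    have := DFunLike.congr_fun h2 v
    simpa using this
  -- A Ap X = X pointwise
  have l1 : ∀ u : K, A (Ap (X u)) = X u := by
    intro u
    obtain ⟨v, hv⟩ := hX (Set.mem_range_self u)
    rw [← hv, p1]
  -- (Ap A) A* = A* pointwise, hence Y' (Ap (A h)) = Y' h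
  have lA : ∀ v : H, Ap (A (ContinuousLinearMap.adjoint A v))
      = ContinuousLinearMap.adjoint A v := by
    intro v
    have h5 : (Ap ∘L A) ∘L ContinuousLinearMap.adjoint A
        = ContinuousLinearMap.adjoint A := by
      rw [← h4, ← ContinuousLinearMap.adjoint_comp]
      rw [show A ∘L (Ap ∘L A) = A ∘L Ap ∘L A from rfl, h1]
    have := DFunLike.congr_fun h5 v
    simpa using this
  have lY : ∀ u : K, Ap (A (Y u)) = Y u := by
    intro u
    obtain ⟨v, hv⟩ := hY (Set.mem_range_self u)
    rw [← hv, lA]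
  have l2 : ∀ h : H, Y' (Ap (A h)) = Y' h := by
    intro h
    have key : Y' ∘L (Ap ∘L A) = Y' := by
      rw [hY', ← h4, ← ContinuousLinearMap.adjoint_comp]
      congr 1
      ext u
      simpa using lY u
    have := DFunLike.congr_fun key h
    simpa using this
  have l5 : ∀ k : K, Y' (Ap (X (W k))) = W k - k := by
    intro k
    have := DFunLike.congr_fun hW1 k
    simp only [ContinuousLinearMap.comp_apply, ContinuousLinearMap.sub_apply,
      ContinuousLinearMap.one_apply] at this
    exact eq_sub_iff_add_eq.mpr ((add_comm _ k).trans (sub_eq_iff_eq_add.mp this).symm)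
  have l6 : ∀ k : K, W (Y' (Ap (X k))) = W k - k := by
    intro k
    have := DFunLike.congr_fun hW2 k
    simp only [ContinuousLinearMap.comp_apply, ContinuousLinearMap.sub_apply,
      ContinuousLinearMap.one_apply, map_sub] at this
    exact eq_sub_iff_add_eq.mpr ((add_comm _ k).trans (sub_eq_iff_eq_add.mp this).symm)
  set B := Ap + Ap ∘L X ∘L W ∘L Y' ∘L Ap with hB
  set D := A - X ∘L Y' with hD
  have hDB : D ∘L B = A ∘L Ap := by
    ext x
    simp only [hD, hB, ContinuousLinearMap.comp_apply, ContinuousLinearMap.add_apply,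
      ContinuousLinearMap.sub_apply, map_add, map_sub]
    rw [l1, l5]
    simp only [map_sub]
    abel
  have hBD : B ∘L D = Ap ∘L A := by
    ext x
    simp only [hD, hB, ContinuousLinearMap.comp_apply, ContinuousLinearMap.add_apply,
      ContinuousLinearMap.sub_apply, map_add, map_sub]
    rw [l2, l6]
    simp only [map_sub]
    abel
  refine ⟨?_, ?_, ?_, ?_⟩
  · rw [hBD]
    ext x
    simp only [hD, ContinuousLinearMap.comp_apply, ContinuousLinearMap.sub_apply]
    rw [p1, l2]
  · rw [hDB]
    ext x
    simp only [hB, ContinuousLinearMap.comp_apply, ContinuousLinearMap.add_apply]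
    rw [p2]
  · rw [show D ∘L (Ap + Ap ∘L X ∘L W ∘L Y' ∘L Ap) = D ∘L B from rfl, hDB, h3]
  · rw [show (Ap + Ap ∘L X ∘L W ∘L Y' ∘L Ap) ∘L D = B ∘L D from rfl, hBD, h4]
end

section
/- Let A ∈ L(H) have closed range with Moore–Penrose inverse A⁺, and let X, Y ∈ L(K,H) with R(X) ⊆ R(A) and R(Y) ⊆ R(A*). If X Y* A⁺ X Y* = X Y*, then R(A − XY*) is closed in H (equivalently, the Moore–Penrose inverse (A − XY*)⁺ exists). -/
open ContinuousLinearMap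

/-- If `R(X) ⊆ R(A)`, `R(Y) ⊆ R(A*)` and `X Y* A⁺ X Y* = X Y*`, then `R(A − XY*)` is
closed in `H`. -/
theorem range_sub_closed
    {H K : Type*}
    [NormedAddCommGroup H] [InnerProductSpace ℂ H] [CompleteSpace H]
    [NormedAddCommGroup K] [InnerProductSpace ℂ K] [CompleteSpace K]
    (A Ap : H →L[ℂ] H)
    (hA : IsClosed (Set.range A))
    (h1 : A ∘L Ap ∘L A = A)
    (h2 : Ap ∘L A ∘L Ap = Ap)
    (h3 : ContinuousLinearMap.adjoint (A ∘L Ap) = A ∘L Ap)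
    (h4 : ContinuousLinearMap.adjoint (Ap ∘L A) = Ap ∘L A)
    (X Y : K →L[ℂ] H)
    (hX : Set.range X ⊆ Set.range A)
    (hY : Set.range Y ⊆ Set.range (ContinuousLinearMap.adjoint A))
    (hXY : (X ∘L ContinuousLinearMap.adjoint Y) ∘L Ap ∘L (X ∘L ContinuousLinearMap.adjoint Y)
      = X ∘L ContinuousLinearMap.adjoint Y) :
    IsClosed (Set.range (A - X ∘L ContinuousLinearMap.adjoint Y)) := by
  set Yd := ContinuousLinearMap.adjoint Y with hYd
  -- pointwise form of h1
  have h1' : ∀ x, A (Ap (A x)) = A x := by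
    intro x
    simpa using DFunLike.congr_fun h1 x
  -- A Ap fixes range of X (hence of T = X Y*)
  have hAApT : ∀ k, A (Ap (X (Yd k))) = X (Yd k) := by
    intro k
    obtain ⟨y, hy⟩ := hX ⟨Yd k, rfl⟩
    rw [← hy]
    exact h1' y
  -- (Ap A) fixes range of adjoint A
  have hAdjOp : (Ap ∘L A) ∘L ContinuousLinearMap.adjoint A = ContinuousLinearMap.adjoint A := by
    have := congrArg ContinuousLinearMap.adjoint h1
    rw [adjoint_comp, h4] at this
    exact this
  -- (Ap A) fixes range of Y
  have hApAY : ∀ k, Ap (A (Y k)) = Y k := by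
    intro k
    obtain ⟨v, hv⟩ := hY ⟨k, rfl⟩
    rw [← hv]
    simpa using DFunLike.congr_fun hAdjOp v
  have hApAYop : (Ap ∘L A) ∘L Y = Y := by
    ext k; simpa using hApAY k
  have hYadj : Yd ∘L (Ap ∘L A) = Yd := by
    have := congrArg ContinuousLinearMap.adjoint hApAYop
    rw [adjoint_comp, h4] at this
    rw [hYd]
    exact this
  have hTApA : ∀ x, X (Yd (Ap (A x))) = X (Yd x) := by
    intro x
    have := DFunLike.congr_fun hYadj x
    simp only [comp_apply] at this
    rw [this]
  have hTApT : ∀ k, X (Yd (Ap (X (Yd k)))) = X (Yd k) := by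
    intro k
    simpa using DFunLike.congr_fun hXY k
  set S := A - X ∘L Yd with hS
  have key : ∀ x, S (Ap (S x)) = S x := by
    intro x
    simp only [hS, sub_apply, comp_apply, map_sub]
    rw [h1' x, hAApT x, hTApA x, hTApT x]
    abel
  set P := S ∘L Ap with hP
  have hPP : ∀ x, P (P x) = P x := by
    intro x
    simp only [hP, comp_apply]
    exact key (Ap x)
  have hrange : Set.range S = Set.range P := by
    apply subset_antisymm
    · rintro _ ⟨x, rfl⟩
      exact ⟨S x, key x⟩
    · rintro _ ⟨x, rfl⟩
      exact ⟨Ap x, rfl⟩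
  have hclosed : IsClosed (Set.range P) := by
    have hpre : Set.range P = (fun x => x - P x) ⁻¹' {0} := by
      ext x
      simp only [Set.mem_preimage, Set.mem_singleton_iff, sub_eq_zero]
      constructor
      · rintro ⟨y, rfl⟩
        exact (hPP y).symm
      · intro h
        exact ⟨x, h.symm⟩
    rw [hpre]
    exact isClosed_singleton.preimage (continuous_id.sub P.continuous)
  have : Set.range (A - X ∘L Yd) = Set.range P := hrange
  rw [this]
  exact hclosed
end

section
/- Let A ∈ L(H) have closed range with Moore–Penrose inverse A⁺, and let X, Y ∈ L(K,H) with R(X) ⊆ R(A) and R(Y) ⊆ R(A*). Assume X Y* A⁺ X Y* = X Y*, and let P be a Moore–Penrose inverse of A⁺XY* and Q a Moore–Penrose inverse of XY*A⁺ (these exist since A⁺XY* and XY*A⁺ are idempotent). Then the Moore–Penrose inverse of A − XY* is given by (A − XY*)⁺ = (I − (A⁺XY*)P) A⁺ (I − Q(XY*A⁺)); that is, C = (I − (A⁺XY*)P) A⁺ (I − Q(XY*A⁺)) satisfies the four Penrose equations for A − XY*. -/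
open ContinuousLinearMap

private lemma mp_aux {R : Type*} [Ring R] [StarRing R]
    (a p b u v m P Q c : R)
    (h1 : a * (p * a) = a) (h2 : p * (a * p) = p)
    (h3 : star (a * p) = a * p) (h4 : star (p * a) = p * a)
    (e1 : a * (p * b) = b) (e2 : b * (p * a) = b) (e3 : b * (p * b) = b)
    (hu : u = p * b) (hv : v = b * p) (hm : m = a - b)
    (hP1 : u * (P * u) = u) (hP3 : star (u * P) = u * P)
    (hQ1 : v * (Q * v) = v) (hQ4 : star (Q * v) = Q * v)
    (hc : c = (1 - u * P) * (p * (1 - Q * v))) :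
    m * (c * m) = m ∧ c * (m * c) = c ∧ star (m * c) = m * c ∧ star (c * m) = c * m := by
  have mu : m * u = 0 := by
    rw [hm, hu, sub_mul, e1, e3, sub_self]
  have vm : v * m = 0 := by
    rw [hm, hv, mul_sub, mul_assoc b p a, e2, mul_assoc b p b, e3, sub_self]
  have vap : v * (a * p) = v := by
    rw [hv, mul_assoc, h2]
  have qv_ap : Q * v * (a * p) = Q * v := by
    rw [mul_assoc, vap]
  have ap_qv : a * p * (Q * v) = Q * v := by
    have h := congrArg star qv_ap
    rwa [star_mul, hQ4, h3] at h
  have pau : p * a * u = u := by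
    rw [hu, mul_assoc, e1]
  have pa_up : p * a * (u * P) = u * P := by
    rw [← mul_assoc, pau]
  have up_pa : u * P * (p * a) = u * P := by
    have h := congrArg star pa_up
    rwa [star_mul, hP3, h4] at h
  have m1 : m * (1 - u * P) = m := by
    rw [mul_sub, mul_one, ← mul_assoc, mu, zero_mul, sub_zero]
  have c1 : (1 - Q * v) * m = m := by
    rw [sub_mul, one_mul, mul_assoc, vm, mul_zero, sub_zero]
  have key1 : m * c = a * p - Q * v := by
    rw [hc, ← mul_assoc, m1, hm, sub_mul, ← mul_assoc, ← mul_assoc, ← hv,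
      mul_sub, mul_sub, mul_one, mul_one, ap_qv, hQ1, sub_self, sub_zero]
  have key2 : c * m = p * a - u * P := by
    rw [hc, mul_assoc, mul_assoc, c1, hm, mul_sub p a b, ← hu, sub_mul, one_mul,
      mul_sub (u * P) (p * a) u, up_pa, mul_assoc u P u, hP1]
    abel
  have inner : p * (1 - Q * v) * (a * p) = p * (1 - Q * v) := by
    rw [mul_sub p 1 (Q * v), mul_one, sub_mul, h2, mul_assoc, qv_ap]
  have cap : c * (a * p) = c := by
    rw [hc, mul_assoc, inner]
  have qvqv : Q * v * (Q * v) = Q * v := by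
    rw [mul_assoc, hQ1]
  have i2 : (1 - Q * v) * (Q * v) = 0 := by
    rw [sub_mul, one_mul, qvqv, sub_self]
  have cqv : c * (Q * v) = 0 := by
    rw [hc, mul_assoc, mul_assoc, i2, mul_zero, mul_zero]
  refine ⟨?_, ?_, ?_, ?_⟩
  · rw [← mul_assoc, key1, sub_mul, mul_assoc Q v m, vm, mul_zero, sub_zero, hm,
      mul_sub, mul_assoc a p a, h1, mul_assoc a p b, e1]
  · rw [key1, mul_sub, cap, cqv, sub_zero]
  · rw [key1, star_sub, h3, hQ4]
  · rw [key2, star_sub, h4, hP3]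

/-- If `R(X) ⊆ R(A)`, `R(Y) ⊆ R(A*)` and `X Y* A⁺ X Y* = X Y*`, and `P`, `Q` are
Moore–Penrose inverses of `A⁺XY*` and `XY*A⁺` respectively, then
`C = (I − (A⁺XY*)P) A⁺ (I − Q(XY*A⁺))` is the Moore–Penrose inverse of `A − XY*`. -/
theorem moore_penrose_of_sub_idempotent_case
    {H K : Type*}
    [NormedAddCommGroup H] [InnerProductSpace ℂ H] [CompleteSpace H]
    [NormedAddCommGroup K] [InnerProductSpace ℂ K] [CompleteSpace K]
    (A Ap : H →L[ℂ] H)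
    (hA : IsClosed (Set.range A))
    (h1 : A ∘L Ap ∘L A = A)
    (h2 : Ap ∘L A ∘L Ap = Ap)
    (h3 : ContinuousLinearMap.adjoint (A ∘L Ap) = A ∘L Ap)
    (h4 : ContinuousLinearMap.adjoint (Ap ∘L A) = Ap ∘L A)
    (X Y : K →L[ℂ] H)
    (hX : Set.range X ⊆ Set.range A)
    (hY : Set.range Y ⊆ Set.range (ContinuousLinearMap.adjoint A))
    (hXY : (X ∘L ContinuousLinearMap.adjoint Y) ∘L Ap ∘L (X ∘L ContinuousLinearMap.adjoint Y)
      = X ∘L ContinuousLinearMap.adjoint Y)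
    -- `U = A⁺XY*`, `V = XY*A⁺`, `M = A − XY*`
    (U V M : H →L[ℂ] H)
    (hU : U = Ap ∘L (X ∘L ContinuousLinearMap.adjoint Y))
    (hV : V = (X ∘L ContinuousLinearMap.adjoint Y) ∘L Ap)
    (hM : M = A - X ∘L ContinuousLinearMap.adjoint Y)
    -- `P` is a Moore–Penrose inverse of `U = A⁺XY*`
    (P : H →L[ℂ] H)
    (hP1 : U ∘L P ∘L U = U) (hP2 : P ∘L U ∘L P = P)
    (hP3 : ContinuousLinearMap.adjoint (U ∘L P) = U ∘L P)
    (hP4 : ContinuousLinearMap.adjoint (P ∘L U) = P ∘L U)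
    -- `Q` is a Moore–Penrose inverse of `V = XY*A⁺`
    (Q : H →L[ℂ] H)
    (hQ1 : V ∘L Q ∘L V = V) (hQ2 : Q ∘L V ∘L Q = Q)
    (hQ3 : ContinuousLinearMap.adjoint (V ∘L Q) = V ∘L Q)
    (hQ4 : ContinuousLinearMap.adjoint (Q ∘L V) = Q ∘L V)
    -- `C = (I − (A⁺XY*)P) A⁺ (I − Q(XY*A⁺))`
    (C : H →L[ℂ] H)
    (hC : C = (1 - U ∘L P) ∘L Ap ∘L (1 - Q ∘L V)) :
    M ∘L C ∘L M = M ∧ C ∘L M ∘L C = C ∧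
      ContinuousLinearMap.adjoint (M ∘L C) = M ∘L C ∧
      ContinuousLinearMap.adjoint (C ∘L M) = C ∘L M := by
  set B : H →L[ℂ] H := X ∘L ContinuousLinearMap.adjoint Y with hB
  -- `A A⁺` fixes the range of `A`, hence fixes `X`
  have hAApX : (A ∘L Ap) ∘L X = X := by
    ext k
    obtain ⟨w, hw⟩ := hX ⟨k, rfl⟩
    have h1v := ContinuousLinearMap.ext_iff.mp h1 w
    simp only [ContinuousLinearMap.comp_apply] at h1v ⊢
    rw [← hw, h1v]
  -- `A⁺ A` fixes the range of `A*`, hence fixes `Y`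
  have hAdjA : (Ap ∘L A) ∘L ContinuousLinearMap.adjoint A = ContinuousLinearMap.adjoint A := by
    have key : ContinuousLinearMap.adjoint ((Ap ∘L A) ∘L ContinuousLinearMap.adjoint A)
        = ContinuousLinearMap.adjoint (ContinuousLinearMap.adjoint A) := by
      rw [ContinuousLinearMap.adjoint_comp, ContinuousLinearMap.adjoint_adjoint, h4]
      exact h1
    have h := congrArg ContinuousLinearMap.adjoint key
    rwa [ContinuousLinearMap.adjoint_adjoint, ContinuousLinearMap.adjoint_adjoint] at h
  have hApAY : (Ap ∘L A) ∘L Y = Y := by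
    ext k
    obtain ⟨w, hw⟩ := hY ⟨k, rfl⟩
    have hv := ContinuousLinearMap.ext_iff.mp hAdjA w
    simp only [ContinuousLinearMap.comp_apply] at hv ⊢
    rw [← hw, hv]
  have hYadj : ContinuousLinearMap.adjoint Y ∘L (Ap ∘L A) = ContinuousLinearMap.adjoint Y := by
    have h := congrArg ContinuousLinearMap.adjoint hApAY
    rwa [ContinuousLinearMap.adjoint_comp, h4] at h
  -- translate everything into the ring `H →L[ℂ] H`
  have e1 : A * (Ap * B) = B := by
    simp only [ContinuousLinearMap.mul_def, hB]
    rw [← ContinuousLinearMap.comp_assoc, ← ContinuousLinearMap.comp_assoc, hAApX]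
  have e2 : B * (Ap * A) = B := by
    simp only [ContinuousLinearMap.mul_def, hB]
    rw [ContinuousLinearMap.comp_assoc, hYadj]
  have e3 : B * (Ap * B) = B := by
    simp only [ContinuousLinearMap.mul_def]
    exact hXY
  have h1' : A * (Ap * A) = A := h1
  have h2' : Ap * (A * Ap) = Ap := h2
  have h3' : star (A * Ap) = A * Ap := by
    simp only [ContinuousLinearMap.star_eq_adjoint, ContinuousLinearMap.mul_def]
    exact h3
  have h4' : star (Ap * A) = Ap * A := by
    simp only [ContinuousLinearMap.star_eq_adjoint, ContinuousLinearMap.mul_def]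
    exact h4
  have hP3' : star (U * P) = U * P := by
    simp only [ContinuousLinearMap.star_eq_adjoint, ContinuousLinearMap.mul_def]
    exact hP3
  have hQ4' : star (Q * V) = Q * V := by
    simp only [ContinuousLinearMap.star_eq_adjoint, ContinuousLinearMap.mul_def]
    exact hQ4
  obtain ⟨g1, g2, g3, g4⟩ :=
    mp_aux A Ap B U V M P Q C h1' h2' h3' h4' e1 e2 e3 hU hV hM hP1 hP3' hQ1 hQ4' hC
  refine ⟨g1, g2, ?_, ?_⟩
  · simpa only [ContinuousLinearMap.star_eq_adjoint, ContinuousLinearMap.mul_def] using g3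
  · simpa only [ContinuousLinearMap.star_eq_adjoint, ContinuousLinearMap.mul_def] using g4
end

section
/- Let A ∈ L(H) have closed range with Moore–Penrose inverse A⁺, and let X, Y ∈ L(K,H) with R(X) ⊆ R(A) and R(Y) ⊆ R(A*). Assume X Y* A⁺ X = X and Y* A⁺ X Y* = Y*. Let P ∈ L(H,K) be a Moore–Penrose inverse of A⁺X ∈ L(K,H), and let Q ∈ L(K,H) be a Moore–Penrose inverse of Y*A⁺ ∈ L(H,K) (these exist). Then the Moore–Penrose inverse of A − XY* is given by (A − XY*)⁺ = (I − (A⁺X)P) A⁺ (I − Q(Y*A⁺)); that is, C = (I − (A⁺X)P) A⁺ (I − Q(Y*A⁺)) satisfies the four Penrose equations for A − XY*. -/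
open ContinuousLinearMap

set_option maxHeartbeats 1000000 in
/-- If `R(X) ⊆ R(A)`, `R(Y) ⊆ R(A*)`, `X Y* A⁺ X = X` and `Y* A⁺ X Y* = Y*`, and `P`, `Q`
are Moore–Penrose inverses of `A⁺X` and `Y*A⁺` respectively, then
`C = (I − (A⁺X)P) A⁺ (I − Q(Y*A⁺))` is the Moore–Penrose inverse of `A − XY*`. -/
theorem moore_penrose_of_sub_special_case
    {H K : Type*}
    [NormedAddCommGroup H] [InnerProductSpace ℂ H] [CompleteSpace H]
    [NormedAddCommGroup K] [InnerProductSpace ℂ K] [CompleteSpace K]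
    (A Ap : H →L[ℂ] H)
    (hA : IsClosed (Set.range A))
    (h1 : A ∘L Ap ∘L A = A)
    (h2 : Ap ∘L A ∘L Ap = Ap)
    (h3 : ContinuousLinearMap.adjoint (A ∘L Ap) = A ∘L Ap)
    (h4 : ContinuousLinearMap.adjoint (Ap ∘L A) = Ap ∘L A)
    (X Y : K →L[ℂ] H)
    (hX : Set.range X ⊆ Set.range A)
    (hY : Set.range Y ⊆ Set.range (ContinuousLinearMap.adjoint A))
    (hXYX : (X ∘L ContinuousLinearMap.adjoint Y) ∘L Ap ∘L X = X)
    (hYXY : (ContinuousLinearMap.adjoint Y) ∘L Ap ∘L (X ∘L ContinuousLinearMap.adjoint Y)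
      = ContinuousLinearMap.adjoint Y)
    -- `U = A⁺X ∈ L(K,H)`, `V = Y*A⁺ ∈ L(H,K)`, `M = A − XY*`
    (U : K →L[ℂ] H) (V : H →L[ℂ] K) (M : H →L[ℂ] H)
    (hU : U = Ap ∘L X)
    (hV : V = (ContinuousLinearMap.adjoint Y) ∘L Ap)
    (hM : M = A - X ∘L ContinuousLinearMap.adjoint Y)
    -- `P ∈ L(H,K)` is a Moore–Penrose inverse of `U = A⁺X`
    (P : H →L[ℂ] K)
    (hP1 : U ∘L P ∘L U = U) (hP2 : P ∘L U ∘L P = P)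
    (hP3 : ContinuousLinearMap.adjoint (U ∘L P) = U ∘L P)
    (hP4 : ContinuousLinearMap.adjoint (P ∘L U) = P ∘L U)
    -- `Q ∈ L(K,H)` is a Moore–Penrose inverse of `V = Y*A⁺`
    (Q : K →L[ℂ] H)
    (hQ1 : V ∘L Q ∘L V = V) (hQ2 : Q ∘L V ∘L Q = Q)
    (hQ3 : ContinuousLinearMap.adjoint (V ∘L Q) = V ∘L Q)
    (hQ4 : ContinuousLinearMap.adjoint (Q ∘L V) = Q ∘L V)
    -- `C = (I − (A⁺X)P) A⁺ (I − Q(Y*A⁺))`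
    (C : H →L[ℂ] H)
    (hC : C = (1 - U ∘L P) ∘L Ap ∘L (1 - Q ∘L V)) :
    M ∘L C ∘L M = M ∧ C ∘L M ∘L C = C ∧
      ContinuousLinearMap.adjoint (M ∘L C) = M ∘L C ∧
      ContinuousLinearMap.adjoint (C ∘L M) = C ∘L M := by
  -- notation
  set Y' := ContinuousLinearMap.adjoint Y with hY'
  -- basic consequences of the range inclusions
  have n1 : A ∘L (Ap ∘L X) = X := by
    ext k
    obtain ⟨w, hw⟩ := hX ⟨k, rfl⟩
    have h1' := ContinuousLinearMap.ext_iff.mp h1 w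
    simp only [ContinuousLinearMap.comp_apply] at h1' ⊢
    rw [← hw, h1']
  have nAstar : (Ap ∘L A) ∘L ContinuousLinearMap.adjoint A = ContinuousLinearMap.adjoint A := by
    have e : ContinuousLinearMap.adjoint ((Ap ∘L A) ∘L ContinuousLinearMap.adjoint A) = A := by
      rw [ContinuousLinearMap.adjoint_comp, ContinuousLinearMap.adjoint_adjoint, h4,
        ← ContinuousLinearMap.comp_assoc]
      exact h1
    calc (Ap ∘L A) ∘L ContinuousLinearMap.adjoint A
        = ContinuousLinearMap.adjoint (ContinuousLinearMap.adjoint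
            ((Ap ∘L A) ∘L ContinuousLinearMap.adjoint A)) :=
          (ContinuousLinearMap.adjoint_adjoint _).symm
      _ = ContinuousLinearMap.adjoint A := by rw [e]
  have n2' : (Ap ∘L A) ∘L Y = Y := by
    ext k
    obtain ⟨z, hz⟩ := hY ⟨k, rfl⟩
    have := ContinuousLinearMap.ext_iff.mp nAstar z
    simp only [ContinuousLinearMap.comp_apply] at this ⊢
    rw [← hz, this]
  have n2 : Y' ∘L (Ap ∘L A) = Y' := by
    have := congrArg ContinuousLinearMap.adjoint n2'
    rwa [ContinuousLinearMap.adjoint_comp, h4] at this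
  -- identities in U, V form
  have b1 : A ∘L U = X := by rw [hU]; exact n1
  have b2 : V ∘L A = Y' := by rw [hV, ContinuousLinearMap.comp_assoc]; exact n2
  have b5 : Ap ∘L (A ∘L U) = U := by rw [b1]; exact hU.symm
  have b5' : (Ap ∘L A) ∘L U = U := by rw [ContinuousLinearMap.comp_assoc]; exact b5
  have b7 : (X ∘L Y') ∘L U = X := by rw [hU]; exact hXYX
  have b8 : V ∘L (X ∘L Y') = Y' := by rw [hV, ContinuousLinearMap.comp_assoc]; exact hYXY
  -- M kills U∘P on the right, Q∘V kills M on the left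
  have hMU : M ∘L U = 0 := by
    rw [hM, ContinuousLinearMap.sub_comp, b1, b7, sub_self]
  have S1 : M ∘L (U ∘L P) = 0 := by
    rw [← ContinuousLinearMap.comp_assoc, hMU, ContinuousLinearMap.zero_comp]
  have hVM : V ∘L M = 0 := by
    rw [hM, ContinuousLinearMap.comp_sub, b2, b8, sub_self]
  have S2 : (Q ∘L V) ∘L M = 0 := by
    rw [ContinuousLinearMap.comp_assoc, hVM, ContinuousLinearMap.comp_zero]
  -- A Ap Q = Q
  have hApstar : (A ∘L Ap) ∘L ContinuousLinearMap.adjoint Ap = ContinuousLinearMap.adjoint Ap := by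
    have e : ContinuousLinearMap.adjoint ((A ∘L Ap) ∘L ContinuousLinearMap.adjoint Ap) = Ap := by
      rw [ContinuousLinearMap.adjoint_comp, ContinuousLinearMap.adjoint_adjoint, h3]
      exact h2
    calc (A ∘L Ap) ∘L ContinuousLinearMap.adjoint Ap
        = ContinuousLinearMap.adjoint (ContinuousLinearMap.adjoint
            ((A ∘L Ap) ∘L ContinuousLinearMap.adjoint Ap)) :=
          (ContinuousLinearMap.adjoint_adjoint _).symm
      _ = ContinuousLinearMap.adjoint Ap := by rw [e]
  have hVstar : ContinuousLinearMap.adjoint V = ContinuousLinearMap.adjoint Ap ∘L Y := by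
    rw [hV, ContinuousLinearMap.adjoint_comp, hY', ContinuousLinearMap.adjoint_adjoint]
  have hAApVstar : (A ∘L Ap) ∘L ContinuousLinearMap.adjoint V = ContinuousLinearMap.adjoint V := by
    rw [hVstar, ← ContinuousLinearMap.comp_assoc, hApstar]
  have hQdecomp : Q = ContinuousLinearMap.adjoint V ∘L (ContinuousLinearMap.adjoint Q ∘L Q) := by
    calc Q = Q ∘L (V ∘L Q) := hQ2.symm
      _ = (Q ∘L V) ∘L Q := by rw [ContinuousLinearMap.comp_assoc]
      _ = ContinuousLinearMap.adjoint (Q ∘L V) ∘L Q := by rw [hQ4]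
      _ = (ContinuousLinearMap.adjoint V ∘L ContinuousLinearMap.adjoint Q) ∘L Q := by
          rw [ContinuousLinearMap.adjoint_comp]
      _ = ContinuousLinearMap.adjoint V ∘L (ContinuousLinearMap.adjoint Q ∘L Q) := by
          rw [ContinuousLinearMap.comp_assoc]
  have S5 : (A ∘L Ap) ∘L Q = Q := by
    conv_lhs => rw [hQdecomp]
    rw [← ContinuousLinearMap.comp_assoc, hAApVstar, ← hQdecomp]
  -- (U P)(Ap A) = U P
  have hUstarApA : ContinuousLinearMap.adjoint U ∘L (Ap ∘L A) =
      ContinuousLinearMap.adjoint U := by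
    have := congrArg ContinuousLinearMap.adjoint b5'
    rwa [ContinuousLinearMap.adjoint_comp, h4] at this
  have S7 : (U ∘L P) ∘L (Ap ∘L A) = U ∘L P := by
    calc (U ∘L P) ∘L (Ap ∘L A)
        = ContinuousLinearMap.adjoint (U ∘L P) ∘L (Ap ∘L A) := by rw [hP3]
      _ = (ContinuousLinearMap.adjoint P ∘L ContinuousLinearMap.adjoint U) ∘L (Ap ∘L A) := by
          rw [ContinuousLinearMap.adjoint_comp]
      _ = ContinuousLinearMap.adjoint P ∘L
            (ContinuousLinearMap.adjoint U ∘L (Ap ∘L A)) := by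
          rw [ContinuousLinearMap.comp_assoc]
      _ = ContinuousLinearMap.adjoint P ∘L ContinuousLinearMap.adjoint U := by rw [hUstarApA]
      _ = ContinuousLinearMap.adjoint (U ∘L P) := by rw [ContinuousLinearMap.adjoint_comp]
      _ = U ∘L P := hP3
  -- monomial lemmas
  have m1 : (A ∘L Ap) ∘L (Q ∘L V) = Q ∘L V := by
    rw [← ContinuousLinearMap.comp_assoc, S5]
  have m2 : (X ∘L V) ∘L (Q ∘L V) = X ∘L V := by
    rw [ContinuousLinearMap.comp_assoc, hQ1]
  have m3 : (U ∘L P) ∘L (U ∘L Y') = U ∘L Y' := by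
    rw [← ContinuousLinearMap.comp_assoc, ContinuousLinearMap.comp_assoc U P U, hP1]
  have m4 : (U ∘L P) ∘L (U ∘L P) = U ∘L P := by
    rw [ContinuousLinearMap.comp_assoc, hP2]
  -- M C = A Ap - Q V
  have hMAp : M ∘L Ap = A ∘L Ap - X ∘L V := by
    rw [hM, ContinuousLinearMap.sub_comp, ContinuousLinearMap.comp_assoc, ← hV]
  have hMC : M ∘L C = A ∘L Ap - Q ∘L V := by
    rw [hC, ← ContinuousLinearMap.comp_assoc, ContinuousLinearMap.comp_sub]
    simp only [ContinuousLinearMap.one_def, ContinuousLinearMap.comp_id]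
    rw [S1, sub_zero, ← ContinuousLinearMap.comp_assoc, hMAp,
      ContinuousLinearMap.sub_comp, ContinuousLinearMap.comp_sub, ContinuousLinearMap.comp_sub]
    simp only [ContinuousLinearMap.comp_id]
    rw [m1, m2, sub_self, sub_zero]
  -- C M = Ap A - U P
  have hApM : Ap ∘L M = Ap ∘L A - U ∘L Y' := by
    rw [hM, ContinuousLinearMap.comp_sub, ← ContinuousLinearMap.comp_assoc, ← hU]
  have hCM : C ∘L M = Ap ∘L A - U ∘L P := by
    rw [hC, ContinuousLinearMap.comp_assoc, ContinuousLinearMap.comp_assoc,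
      ContinuousLinearMap.sub_comp (1 : H →L[ℂ] H) (Q ∘L V) M]
    simp only [ContinuousLinearMap.one_def, ContinuousLinearMap.id_comp]
    rw [S2, sub_zero, hApM, ContinuousLinearMap.sub_comp]
    simp only [ContinuousLinearMap.id_comp]
    rw [ContinuousLinearMap.comp_sub, S7, m3, sub_sub_sub_cancel_right]
  -- the four Penrose equations
  refine ⟨?_, ?_, ?_, ?_⟩
  · -- M C M = M
    rw [← ContinuousLinearMap.comp_assoc, hMC, ContinuousLinearMap.sub_comp, S2, sub_zero,
      hM, ContinuousLinearMap.comp_sub, ContinuousLinearMap.comp_assoc A Ap A, h1,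
      ← ContinuousLinearMap.comp_assoc (A ∘L Ap) X Y', ContinuousLinearMap.comp_assoc A Ap X, n1]
  · -- C M C = C
    rw [← ContinuousLinearMap.comp_assoc, hCM]
    have e1 : (U ∘L P) ∘L C = 0 := by
      rw [hC, ← ContinuousLinearMap.comp_assoc, ContinuousLinearMap.comp_sub]
      simp only [ContinuousLinearMap.one_def, ContinuousLinearMap.comp_id]
      rw [m4, sub_self, ContinuousLinearMap.zero_comp]
    have e2 : (Ap ∘L A) ∘L C = C := by
      rw [hC, ← ContinuousLinearMap.comp_assoc, ContinuousLinearMap.comp_sub]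
      simp only [ContinuousLinearMap.one_def, ContinuousLinearMap.comp_id]
      rw [← ContinuousLinearMap.comp_assoc (Ap ∘L A) U P, b5',
        ContinuousLinearMap.sub_comp, ContinuousLinearMap.sub_comp,
        ← ContinuousLinearMap.comp_assoc (Ap ∘L A) Ap _,
        ContinuousLinearMap.comp_assoc Ap A Ap, h2]
      simp only [ContinuousLinearMap.id_comp]
    rw [ContinuousLinearMap.sub_comp, e1, e2, sub_zero]
  · rw [hMC, map_sub, h3, hQ4]
  · rw [hCM, map_sub, h4, hP3]
end

section
/- Let A ∈ L(H) have closed range with Moore–Penrose inverse A⁺, and let X, Y ∈ L(K,H) with R(X) ⊆ R(A) and R(Y) ⊆ R(A*). Assume R(A − XY*), R(A⁺XY*), and R(XY*A⁺) are closed, with Moore–Penrose inverses (A − XY*)⁺, (A⁺XY*)⁺, and (XY*A⁺)⁺ respectively. If (A − XY*)⁺ = (I − (A⁺XY*)(A⁺XY*)⁺) A⁺ (I − (XY*A⁺)⁺(XY*A⁺)), then X Y* A⁺ X Y* = X Y*. -/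
open ContinuousLinearMap

/-- Converse direction: if `R(A − XY*)`, `R(A⁺XY*)`, `R(XY*A⁺)` are closed and
`(A − XY*)⁺ = (I − (A⁺XY*)(A⁺XY*)⁺) A⁺ (I − (XY*A⁺)⁺(XY*A⁺))`, then
`X Y* A⁺ X Y* = X Y*`. -/
theorem converse_idempotent_case
    {H K : Type*}
    [NormedAddCommGroup H] [InnerProductSpace ℂ H] [CompleteSpace H]
    [NormedAddCommGroup K] [InnerProductSpace ℂ K] [CompleteSpace K]
    (A Ap : H →L[ℂ] H)
    (hA : IsClosed (Set.range A))
    (h1 : A ∘L Ap ∘L A = A)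
    (h2 : Ap ∘L A ∘L Ap = Ap)
    (h3 : ContinuousLinearMap.adjoint (A ∘L Ap) = A ∘L Ap)
    (h4 : ContinuousLinearMap.adjoint (Ap ∘L A) = Ap ∘L A)
    (X Y : K →L[ℂ] H)
    (hX : Set.range X ⊆ Set.range A)
    (hY : Set.range Y ⊆ Set.range (ContinuousLinearMap.adjoint A))
    -- `U = A⁺XY*`, `V = XY*A⁺`, `M = A − XY*`
    (U V M : H →L[ℂ] H)
    (hU : U = Ap ∘L (X ∘L ContinuousLinearMap.adjoint Y))
    (hV : V = (X ∘L ContinuousLinearMap.adjoint Y) ∘L Ap)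
    (hM : M = A - X ∘L ContinuousLinearMap.adjoint Y)
    -- closed ranges
    (hMcl : IsClosed (Set.range M))
    (hUcl : IsClosed (Set.range U))
    (hVcl : IsClosed (Set.range V))
    -- `Mp` is the Moore–Penrose inverse of `M = A − XY*`
    (Mp : H →L[ℂ] H)
    (hMp1 : M ∘L Mp ∘L M = M) (hMp2 : Mp ∘L M ∘L Mp = Mp)
    (hMp3 : ContinuousLinearMap.adjoint (M ∘L Mp) = M ∘L Mp)
    (hMp4 : ContinuousLinearMap.adjoint (Mp ∘L M) = Mp ∘L M)
    -- `Up` is the Moore–Penrose inverse of `U = A⁺XY*`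
    (Up : H →L[ℂ] H)
    (hUp1 : U ∘L Up ∘L U = U) (hUp2 : Up ∘L U ∘L Up = Up)
    (hUp3 : ContinuousLinearMap.adjoint (U ∘L Up) = U ∘L Up)
    (hUp4 : ContinuousLinearMap.adjoint (Up ∘L U) = Up ∘L U)
    -- `Vp` is the Moore–Penrose inverse of `V = XY*A⁺`
    (Vp : H →L[ℂ] H)
    (hVp1 : V ∘L Vp ∘L V = V) (hVp2 : Vp ∘L V ∘L Vp = Vp)
    (hVp3 : ContinuousLinearMap.adjoint (V ∘L Vp) = V ∘L Vp)
    (hVp4 : ContinuousLinearMap.adjoint (Vp ∘L V) = Vp ∘L V)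
    (hEq : Mp = (1 - U ∘L Up) ∘L Ap ∘L (1 - Vp ∘L V)) :
    (X ∘L ContinuousLinearMap.adjoint Y) ∘L Ap ∘L (X ∘L ContinuousLinearMap.adjoint Y)
      = X ∘L ContinuousLinearMap.adjoint Y := by
  set B : H →L[ℂ] H := X ∘L ContinuousLinearMap.adjoint Y with hB
  -- `A Ap B = B` since `R(B) ⊆ R(X) ⊆ R(A)`
  have hAApB : A ∘L (Ap ∘L B) = B := by
    ext k
    obtain ⟨y, hy⟩ := hX (Set.mem_range_self (ContinuousLinearMap.adjoint Y k))
    have h1' := ContinuousLinearMap.ext_iff.mp h1 y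
    simp only [ContinuousLinearMap.comp_apply, hB] at h1' ⊢
    rw [← hy, h1']
  -- `Ap A A* = A*`
  have hApAAstar : (Ap ∘L A) ∘L ContinuousLinearMap.adjoint A = ContinuousLinearMap.adjoint A := by
    have h := congrArg ContinuousLinearMap.adjoint h1
    rwa [ContinuousLinearMap.adjoint_comp, h4] at h
  -- `Ap A Y = Y` since `R(Y) ⊆ R(A*)`
  have hApAY : (Ap ∘L A) ∘L Y = Y := by
    ext k
    obtain ⟨z, hz⟩ := hY (Set.mem_range_self k)
    have h' := ContinuousLinearMap.ext_iff.mp hApAAstar z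
    simp only [ContinuousLinearMap.comp_apply] at h' ⊢
    rw [← hz, h']
  -- `Y* Ap A = Y*`
  have hYstarApA : ContinuousLinearMap.adjoint Y ∘L (Ap ∘L A)
      = ContinuousLinearMap.adjoint Y := by
    have h := congrArg ContinuousLinearMap.adjoint hApAY
    rwa [ContinuousLinearMap.adjoint_comp, h4] at h
  have hBApA : B ∘L (Ap ∘L A) = B := by
    ext k
    have h' := ContinuousLinearMap.ext_iff.mp hYstarApA k
    simp only [ContinuousLinearMap.comp_apply, hB] at h' ⊢
    rw [h']
  -- switch to ring notation
  have hAU : A * U = B := by rw [mul_def, hU]; exact hAApB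
  have hBU : ∀ W : H →L[ℂ] H, B * U = B ∘L (Ap ∘L B) → True := fun _ _ => trivial
  have hUp1' : U * (Up * U) = U := hUp1
  have hMp1' : M * (Mp * M) = M := hMp1
  have hEq' : Mp = (1 - U * Up) * (Ap * (1 - Vp * V)) := hEq
  -- `(UUp)(UUp) = UUp`
  have hUUp2 : (U * Up) * (U * Up) = U * Up := by
    calc (U * Up) * (U * Up) = (U * (Up * U)) * Up := by noncomm_ring
    _ = U * Up := by rw [hUp1']
  -- `(UUp) Mp = 0`
  have hUUpMp : (U * Up) * Mp = 0 := by
    rw [hEq']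
    have h0 : (U * Up) * (1 - U * Up) = 0 := by
      rw [mul_sub, mul_one, hUUp2, sub_self]
    calc (U * Up) * ((1 - U * Up) * (Ap * (1 - Vp * V)))
        = ((U * Up) * (1 - U * Up)) * (Ap * (1 - Vp * V)) := by noncomm_ring
    _ = 0 := by rw [h0, zero_mul]
  -- `(UUp)(MpM) = 0`
  have hUUpMpM : (U * Up) * (Mp * M) = 0 := by
    calc (U * Up) * (Mp * M) = ((U * Up) * Mp) * M := by noncomm_ring
    _ = 0 := by rw [hUUpMp, zero_mul]
  -- self-adjointness in star form
  have hUUp_sa : star (U * Up) = U * Up := by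
    rw [ContinuousLinearMap.star_eq_adjoint, mul_def]; exact hUp3
  have hMpM_sa : star (Mp * M) = Mp * M := by
    rw [ContinuousLinearMap.star_eq_adjoint, mul_def]; exact hMp4
  -- `(MpM)(UUp) = 0` by taking adjoints
  have hMpMUUp : (Mp * M) * (U * Up) = 0 := by
    have h := congrArg star hUUpMpM
    rwa [star_mul, hUUp_sa, hMpM_sa, star_zero] at h
  -- `(MpM) U = 0`
  have hMpMU : (Mp * M) * U = 0 := by
    calc (Mp * M) * U = (Mp * M) * (U * (Up * U)) := by rw [hUp1']
    _ = ((Mp * M) * (U * Up)) * U := by noncomm_ring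
    _ = 0 := by rw [hMpMUUp, zero_mul]
  -- `M U = 0`
  have hMU : M * U = 0 := by
    calc M * U = (M * (Mp * M)) * U := by rw [hMp1']
    _ = M * ((Mp * M) * U) := by noncomm_ring
    _ = 0 := by rw [hMpMU, mul_zero]
  -- conclude: `B U = A U = B`
  have hM' : M = A - B := hM
  have hBUeq : B * U = B := by
    have : (A - B) * U = 0 := by rw [← hM']; exact hMU
    rw [sub_mul, sub_eq_zero] at this
    rw [← this, hAU]
  show B ∘L (Ap ∘L B) = B
  rw [← hU, ← mul_def]
  exact hBUeq
end

section
/- Let A ∈ L(H) have closed range with Moore–Penrose inverse A⁺, and let X, Y ∈ L(K,H) with R(X) ⊆ R(A) and R(Y) ⊆ R(A*). Assume R(A − XY*), R(A⁺X), and R(Y*A⁺) are closed, with Moore–Penrose inverses (A − XY*)⁺ ∈ L(H), (A⁺X)⁺ ∈ L(H,K), and (Y*A⁺)⁺ ∈ L(K,H) respectively. If (A − XY*)⁺ = (I − (A⁺X)(A⁺X)⁺) A⁺ (I − (Y*A⁺)⁺(Y*A⁺)), then X Y* A⁺ X = X and Y* A⁺ X Y* = Y*. -/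
open ContinuousLinearMap

set_option maxHeartbeats 1000000 in
/-- Converse direction: if `R(A − XY*)`, `R(A⁺X)`, `R(Y*A⁺)` are closed and
`(A − XY*)⁺ = (I − (A⁺X)(A⁺X)⁺) A⁺ (I − (Y*A⁺)⁺(Y*A⁺))`, then `X Y* A⁺ X = X` and
`Y* A⁺ X Y* = Y*`. -/
theorem converse_special_case
    {H K : Type*}
    [NormedAddCommGroup H] [InnerProductSpace ℂ H] [CompleteSpace H]
    [NormedAddCommGroup K] [InnerProductSpace ℂ K] [CompleteSpace K]
    (A Ap : H →L[ℂ] H)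
    (hA : IsClosed (Set.range A))
    (h1 : A ∘L Ap ∘L A = A)
    (h2 : Ap ∘L A ∘L Ap = Ap)
    (h3 : ContinuousLinearMap.adjoint (A ∘L Ap) = A ∘L Ap)
    (h4 : ContinuousLinearMap.adjoint (Ap ∘L A) = Ap ∘L A)
    (X Y : K →L[ℂ] H)
    (hX : Set.range X ⊆ Set.range A)
    (hY : Set.range Y ⊆ Set.range (ContinuousLinearMap.adjoint A))
    -- `U = A⁺X ∈ L(K,H)`, `V = Y*A⁺ ∈ L(H,K)`, `M = A − XY*`
    (U : K →L[ℂ] H) (V : H →L[ℂ] K) (M : H →L[ℂ] H)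
    (hU : U = Ap ∘L X)
    (hV : V = (ContinuousLinearMap.adjoint Y) ∘L Ap)
    (hM : M = A - X ∘L ContinuousLinearMap.adjoint Y)
    -- closed ranges
    (hMcl : IsClosed (Set.range M))
    (hUcl : IsClosed (Set.range U))
    (hVcl : IsClosed (Set.range V))
    -- `Mp` is the Moore–Penrose inverse of `M = A − XY*`
    (Mp : H →L[ℂ] H)
    (hMp1 : M ∘L Mp ∘L M = M) (hMp2 : Mp ∘L M ∘L Mp = Mp)
    (hMp3 : ContinuousLinearMap.adjoint (M ∘L Mp) = M ∘L Mp)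
    (hMp4 : ContinuousLinearMap.adjoint (Mp ∘L M) = Mp ∘L M)
    -- `Up ∈ L(H,K)` is the Moore–Penrose inverse of `U = A⁺X`
    (Up : H →L[ℂ] K)
    (hUp1 : U ∘L Up ∘L U = U) (hUp2 : Up ∘L U ∘L Up = Up)
    (hUp3 : ContinuousLinearMap.adjoint (U ∘L Up) = U ∘L Up)
    (hUp4 : ContinuousLinearMap.adjoint (Up ∘L U) = Up ∘L U)
    -- `Vp ∈ L(K,H)` is the Moore–Penrose inverse of `V = Y*A⁺`
    (Vp : K →L[ℂ] H)
    (hVp1 : V ∘L Vp ∘L V = V) (hVp2 : Vp ∘L V ∘L Vp = Vp)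
    (hVp3 : ContinuousLinearMap.adjoint (V ∘L Vp) = V ∘L Vp)
    (hVp4 : ContinuousLinearMap.adjoint (Vp ∘L V) = Vp ∘L V)
    (hEq : Mp = (1 - U ∘L Up) ∘L Ap ∘L (1 - Vp ∘L V)) :
    (X ∘L ContinuousLinearMap.adjoint Y) ∘L Ap ∘L X = X ∧
      (ContinuousLinearMap.adjoint Y) ∘L Ap ∘L (X ∘L ContinuousLinearMap.adjoint Y)
        = ContinuousLinearMap.adjoint Y := by

  -- abbreviate adjoint
  have hUadj : ContinuousLinearMap.adjoint U ∘L (U ∘L Up) = ContinuousLinearMap.adjoint U := by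
    have h := hUp1
    rw [← ContinuousLinearMap.comp_assoc] at h
    have h' := congrArg ContinuousLinearMap.adjoint h
    rw [ContinuousLinearMap.adjoint_comp, hUp3] at h'
    exact h'
  have hVadj : (Vp ∘L V) ∘L ContinuousLinearMap.adjoint V = ContinuousLinearMap.adjoint V := by
    have h' := congrArg ContinuousLinearMap.adjoint hVp1
    rw [ContinuousLinearMap.adjoint_comp, hVp4] at h'
    exact h'
  have hP : ContinuousLinearMap.adjoint U ∘L (1 - U ∘L Up) = 0 := by
    rw [ContinuousLinearMap.comp_sub, ContinuousLinearMap.one_def, ContinuousLinearMap.comp_id, hUadj, sub_self]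
  have hQ : (1 - Vp ∘L V) ∘L ContinuousLinearMap.adjoint V = 0 := by
    rw [ContinuousLinearMap.sub_comp, ContinuousLinearMap.one_def, ContinuousLinearMap.id_comp, hVadj, sub_self]
  have hUMp : ContinuousLinearMap.adjoint U ∘L Mp = 0 := by
    rw [hEq, ← ContinuousLinearMap.comp_assoc, hP, ContinuousLinearMap.zero_comp]
  have hMpV : Mp ∘L ContinuousLinearMap.adjoint V = 0 := by
    rw [hEq, ContinuousLinearMap.comp_assoc, ContinuousLinearMap.comp_assoc, hQ,
      ContinuousLinearMap.comp_zero, ContinuousLinearMap.comp_zero]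
  -- M U = 0
  have a1 : ContinuousLinearMap.adjoint U ∘L (Mp ∘L M) = 0 := by
    rw [← ContinuousLinearMap.comp_assoc, hUMp, ContinuousLinearMap.zero_comp]
  have a2 : (Mp ∘L M) ∘L U = 0 := by
    have h' := congrArg ContinuousLinearMap.adjoint a1
    rw [ContinuousLinearMap.adjoint_comp, hMp4, ContinuousLinearMap.adjoint_adjoint] at h'
    simpa using h'
  have hMU : M ∘L U = 0 := by
    calc M ∘L U = (M ∘L (Mp ∘L M)) ∘L U := by rw [hMp1]
    _ = M ∘L ((Mp ∘L M) ∘L U) := by rw [ContinuousLinearMap.comp_assoc]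
    _ = 0 := by rw [a2, ContinuousLinearMap.comp_zero]
  -- V M = 0
  have b1 : (M ∘L Mp) ∘L ContinuousLinearMap.adjoint V = 0 := by
    rw [ContinuousLinearMap.comp_assoc, hMpV, ContinuousLinearMap.comp_zero]
  have b2 : V ∘L (M ∘L Mp) = 0 := by
    have h' := congrArg ContinuousLinearMap.adjoint b1
    rw [ContinuousLinearMap.adjoint_comp, hMp3, ContinuousLinearMap.adjoint_adjoint] at h'
    simpa using h'
  have hVM : V ∘L M = 0 := by
    calc V ∘L M = V ∘L (M ∘L (Mp ∘L M)) := by rw [hMp1]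
    _ = (V ∘L (M ∘L Mp)) ∘L M := by
          simp only [ContinuousLinearMap.comp_assoc]
    _ = 0 := by rw [b2, ContinuousLinearMap.zero_comp]
  -- A Ap X = X
  have hAApX : (A ∘L Ap) ∘L X = X := by
    ext k
    obtain ⟨w, hw⟩ := hX (Set.mem_range_self k)
    have h' := DFunLike.congr_fun h1 w
    simp only [ContinuousLinearMap.comp_apply] at h' ⊢
    rw [← hw]
    exact h'
  -- Ap A A* = A*
  have hApAAstar : (Ap ∘L A) ∘L ContinuousLinearMap.adjoint A = ContinuousLinearMap.adjoint A := by
    have h' := congrArg ContinuousLinearMap.adjoint h1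
    rw [ContinuousLinearMap.adjoint_comp, h4] at h'
    exact h'
  have hApAY : (Ap ∘L A) ∘L Y = Y := by
    ext k
    obtain ⟨w, hw⟩ := hY (Set.mem_range_self k)
    have h' := DFunLike.congr_fun hApAAstar w
    simp only [ContinuousLinearMap.comp_apply] at h' ⊢
    rw [← hw]
    exact h'
  have hVA : V ∘L A = ContinuousLinearMap.adjoint Y := by
    have h' := congrArg ContinuousLinearMap.adjoint hApAY
    rw [ContinuousLinearMap.adjoint_comp, h4] at h'
    rw [hV, ContinuousLinearMap.comp_assoc]
    exact h'
  constructor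
  · have g1 : (A - X ∘L ContinuousLinearMap.adjoint Y) ∘L (Ap ∘L X) = 0 := by
      rw [← hM, ← hU]; exact hMU
    rw [ContinuousLinearMap.sub_comp, sub_eq_zero] at g1
    rw [← g1, ← ContinuousLinearMap.comp_assoc]
    exact hAApX
  · have g2 : V ∘L (A - X ∘L ContinuousLinearMap.adjoint Y) = 0 := by
      rw [← hM]; exact hVM
    rw [ContinuousLinearMap.comp_sub, sub_eq_zero] at g2
    have : ContinuousLinearMap.adjoint Y ∘L (Ap ∘L (X ∘L ContinuousLinearMap.adjoint Y))
        = V ∘L (X ∘L ContinuousLinearMap.adjoint Y) := by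
      rw [hV, ContinuousLinearMap.comp_assoc]
    rw [this, ← g2, hVA]
end

section
/- Let A ∈ L(H) have closed range with Moore–Penrose inverse A⁺, and let X, Y ∈ L(K,H) with R(X) ⊆ R(A), R(Y) ⊆ R(A*), and X Y* A⁺ X Y* = X Y*. If P ∈ L(H) is a self-adjoint idempotent with R(P) = R(A⁺XY*), then I − A⁺A + P is a self-adjoint idempotent with range R(I − A⁺(A − XY*)); that is, the orthogonal projection onto R(I − A⁺(A − XY*)) equals I − A⁺A + P. -/
open ContinuousLinearMap

/-- If `P` is the orthogonal projection onto `R(A⁺XY*)`, then `I − A⁺A + P` is the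
orthogonal projection onto `R(I − A⁺(A − XY*))`. -/
theorem projection_onto_range_one_sub
    {H K : Type*}
    [NormedAddCommGroup H] [InnerProductSpace ℂ H] [CompleteSpace H]
    [NormedAddCommGroup K] [InnerProductSpace ℂ K] [CompleteSpace K]
    (A Ap : H →L[ℂ] H)
    (hA : IsClosed (Set.range A))
    (h1 : A ∘L Ap ∘L A = A)
    (h2 : Ap ∘L A ∘L Ap = Ap)
    (h3 : ContinuousLinearMap.adjoint (A ∘L Ap) = A ∘L Ap)
    (h4 : ContinuousLinearMap.adjoint (Ap ∘L A) = Ap ∘L A)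
    (X Y : K →L[ℂ] H)
    (hX : Set.range X ⊆ Set.range A)
    (hY : Set.range Y ⊆ Set.range (ContinuousLinearMap.adjoint A))
    (hXY : (X ∘L ContinuousLinearMap.adjoint Y) ∘L Ap ∘L (X ∘L ContinuousLinearMap.adjoint Y)
      = X ∘L ContinuousLinearMap.adjoint Y)
    (P : H →L[ℂ] H)
    (hP1 : P ∘L P = P) (hP2 : ContinuousLinearMap.adjoint P = P)
    (hP3 : Set.range P = Set.range (Ap ∘L (X ∘L ContinuousLinearMap.adjoint Y))) :
    (1 - Ap ∘L A + P) ∘L (1 - Ap ∘L A + P) = 1 - Ap ∘L A + P ∧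
      ContinuousLinearMap.adjoint (1 - Ap ∘L A + P) = 1 - Ap ∘L A + P ∧
      Set.range ((1 : H →L[ℂ] H) - Ap ∘L A + P)
        = Set.range ((1 : H →L[ℂ] H) - Ap ∘L (A - X ∘L ContinuousLinearMap.adjoint Y)) := by
  set Q : H →L[ℂ] H := Ap ∘L A with hQdef
  set Z : H →L[ℂ] H := X ∘L ContinuousLinearMap.adjoint Y with hZdef
  set D : H →L[ℂ] H := Ap ∘L Z with hDdef
  -- Q ∘ adjoint A = adjoint A
  have hQAs : Q ∘L ContinuousLinearMap.adjoint A = ContinuousLinearMap.adjoint A := by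
    have : ContinuousLinearMap.adjoint (A ∘L Q) = Q ∘L ContinuousLinearMap.adjoint A := by
      rw [ContinuousLinearMap.adjoint_comp, h4]
    rw [← this, h1]
  -- Q ∘ Y = Y
  have hQY : Q ∘L Y = Y := by
    ext k
    obtain ⟨u, hu⟩ := hY ⟨k, rfl⟩
    have := congrFun (congrArg (fun (f : H →L[ℂ] H) => (f : H → H)) hQAs) u
    simp only [ContinuousLinearMap.comp_apply] at this ⊢
    rw [← hu, this]
  -- adjoint Y ∘ Q = adjoint Y
  have hYQ : ContinuousLinearMap.adjoint Y ∘L Q = ContinuousLinearMap.adjoint Y := by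
    have := congrArg ContinuousLinearMap.adjoint hQY
    rwa [ContinuousLinearMap.adjoint_comp, h4] at this
  have hZQ : Z ∘L Q = Z := by
    rw [hZdef, ContinuousLinearMap.comp_assoc, hYQ]
  have hDD : D ∘L D = D := by
    rw [hDdef]
    calc Ap ∘L Z ∘L (Ap ∘L Z) = Ap ∘L (Z ∘L Ap ∘L Z) := by
          rw [ContinuousLinearMap.comp_assoc]
      _ = Ap ∘L Z := by rw [hXY]
  have hQD : Q ∘L D = D := by
    rw [hQdef, hDdef]
    simp only [← ContinuousLinearMap.comp_assoc] at h2 ⊢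
    rw [h2]
  have hDQ : D ∘L Q = D := by
    rw [hDdef, ContinuousLinearMap.comp_assoc, hZQ]
  -- helper
  have key : ∀ (U V W : H →L[ℂ] H), Set.range V ⊆ Set.range W → U ∘L W = W → U ∘L V = V := by
    intro U V W hsub h
    ext x
    obtain ⟨u, hu⟩ := hsub ⟨x, rfl⟩
    have := congrFun (congrArg (fun (f : H →L[ℂ] H) => (f : H → H)) h) u
    simp only [ContinuousLinearMap.comp_apply] at this ⊢
    rw [← hu, this]
  have hrP : Set.range P ⊆ Set.range D := by rw [hP3]
  have hrD : Set.range D ⊆ Set.range P := by rw [hP3]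
  have hQP : Q ∘L P = P := key Q P D hrP hQD
  have hDP : D ∘L P = P := key D P D hrP hDD
  have hPD : P ∘L D = D := key P D P hrD hP1
  have hPQ : P ∘L Q = P := by
    have := congrArg ContinuousLinearMap.adjoint hQP
    rwa [ContinuousLinearMap.adjoint_comp, h4, hP2] at this
  have hQQ : Q ∘L Q = Q := by
    rw [hQdef]
    simp only [← ContinuousLinearMap.comp_assoc] at h2 ⊢
    rw [h2]
  -- switch to ring notation
  have hmul : ∀ (f g : H →L[ℂ] H), f ∘L g = f * g := fun _ _ => rfl
  refine ⟨?_, ?_, ?_⟩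
  · rw [hmul]
    simp only [hmul] at hQQ hQP hPQ hP1
    simp only [mul_add, add_mul, sub_mul, mul_sub, mul_one, one_mul, hQQ, hQP, hPQ, hP1]
    abel
  · rw [← ContinuousLinearMap.star_eq_adjoint]
    simp only [star_add, star_sub, star_one, ContinuousLinearMap.star_eq_adjoint, h4, hP2]
  · have hAZ : Ap ∘L (A - Z) = Q - D := by
      rw [hmul, mul_sub, ← hmul, ← hmul, ← hQdef, ← hDdef]
    have hMF : ((1 : H →L[ℂ] H) - (Q - D)) ∘L (1 - Q + P) = 1 - Q + P := by
      rw [hmul]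
      simp only [hmul] at hQQ hQP hDQ hDP
      simp only [mul_add, add_mul, sub_mul, mul_sub, mul_one, one_mul, hQQ, hQP, hDQ, hDP]
      abel
    have hFM : ((1 : H →L[ℂ] H) - Q + P) ∘L (1 - (Q - D)) = 1 - (Q - D) := by
      rw [hmul]
      simp only [hmul] at hQQ hPQ hQD hPD
      simp only [mul_add, add_mul, sub_mul, mul_sub, mul_one, one_mul, hQQ, hPQ, hQD, hPD]
      abel
    rw [hAZ]
    apply Set.Subset.antisymm
    · rintro x ⟨y, rfl⟩
      exact ⟨(1 - Q + P) y, by rw [← ContinuousLinearMap.comp_apply, hMF]⟩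
    · rintro x ⟨y, rfl⟩
      exact ⟨(1 - (Q - D)) y, by rw [← ContinuousLinearMap.comp_apply, hFM]⟩
end

section
/- Let A ∈ L(H) have closed range with Moore–Penrose inverse A⁺, and let X, Y ∈ L(K,H) with R(X) ⊆ R(A), R(Y) ⊆ R(A*), and X Y* A⁺ X Y* = X Y*. If Q ∈ L(H) is a self-adjoint idempotent with R(Q) = R(I − XY*A⁺), then A A⁺ − I + Q is a self-adjoint idempotent with range R((A − XY*)A⁺); that is, the orthogonal projection onto R((A − XY*)A⁺) equals A A⁺ − I + Q. -/
open ContinuousLinearMap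

/-!
Write `P = A A⁺` and `E = XY*A⁺`. Then `P` is an orthogonal projection, `E` is an idempotent with
`PE = E = EP`, and `(A − XY*)A⁺ = P − E`. Since `R(Q) = R(1 − E)`, we get `(1 − Q)(1 − E) = 0`,
so `1 − Q = (1 − Q)E = (1 − Q)EP = (1 − Q)P`: the projection `1 − Q` lies below `P`, whence
`P − (1 − Q)` is an orthogonal projection. Finally `P − (1 − Q)` and `P − E` are each a left
multiple of the other, so they have the same range.
-/

section Ring

variable {R : Type*} [Ring R] {p q e : R}

theorem one_sub_mul_eq_self_of_mul_one_sub_eq (hqe : q * (1 - e) = 1 - e) :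
    (1 - q) * e = 1 - q := by
  calc (1 - q) * e = (1 - q) - (1 - q) * (1 - e) := by noncomm_ring
    _ = 1 - q := by rw [sub_mul, one_mul, hqe, sub_self, sub_zero]

theorem one_sub_mul_eq_self_of_mul_eq (hep : e * p = e) (hqe : q * (1 - e) = 1 - e) :
    (1 - q) * p = 1 - q := by
  rw [← one_sub_mul_eq_self_of_mul_one_sub_eq hqe, mul_assoc, hep]

theorem IsIdempotentElem.sub_one_add_mul_sub (hp : IsIdempotentElem p) (hpe : p * e = e)
    (hep : e * p = e) (hqe : q * (1 - e) = 1 - e) : (p - 1 + q) * (p - e) = p - e := by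
  have hq_p := one_sub_mul_eq_self_of_mul_eq hep hqe
  have hq_e := one_sub_mul_eq_self_of_mul_one_sub_eq hqe
  calc (p - 1 + q) * (p - e) = p * p - p * e - ((1 - q) * p - (1 - q) * e) := by noncomm_ring
    _ = p - e := by rw [hp.eq, hpe, hq_p, hq_e, sub_self, sub_zero]

variable [StarRing R]

theorem IsStarProjection.sub_one_add (hp : IsStarProjection p) (hq : IsStarProjection q)
    (hep : e * p = e) (hqe : q * (1 - e) = 1 - e) : IsStarProjection (p - 1 + q) := by
  rw [sub_add]
  exact hq.one_sub.sub_of_mul_eq_left hp (one_sub_mul_eq_self_of_mul_eq hep hqe)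

theorem IsStarProjection.mul_one_sub_eq_self (hp : IsStarProjection p) (hq : IsStarProjection q)
    (hep : e * p = e) (hqe : q * (1 - e) = 1 - e) : p * (1 - q) = 1 - q := by
  simpa [hp.isSelfAdjoint.star_eq, hq.isSelfAdjoint.star_eq] using
    congr(star $(one_sub_mul_eq_self_of_mul_eq hep hqe))

theorem IsStarProjection.sub_mul_sub_one_add (hp : IsStarProjection p) (hq : IsStarProjection q)
    (hep : e * p = e) (hqe : q * (1 - e) = 1 - e) (hqe' : (1 - e) * q = q) :
    (p - e) * (p - 1 + q) = p - 1 + q := by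
  have hp_q := hp.mul_one_sub_eq_self hq hep hqe
  have he_q : e * q = 0 := by
    rwa [sub_mul, one_mul, sub_eq_self] at hqe'
  calc (p - e) * (p - 1 + q) = p * p - p * (1 - q) - e * p + e - e * q := by noncomm_ring
    _ = p - 1 + q := by rw [hp.isIdempotentElem.eq, hp_q, hep, he_q]; abel

end Ring

theorem Set.range_eq_of_comp_eq {α : Type*} {f g : α → α} (hfg : f ∘ g = g) (hgf : g ∘ f = f) :
    Set.range f = Set.range g :=
  (hgf ▸ Set.range_comp_subset_range f g).antisymm (hfg ▸ Set.range_comp_subset_range g f)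

namespace ContinuousLinearMap

variable {S M : Type*} [Semiring S] [TopologicalSpace M] [AddCommMonoid M] [Module S M]

theorem mul_eq_right_of_range_subset {q f : M →L[S] M} (hq : IsIdempotentElem q)
    (h : Set.range f ⊆ Set.range q) : q * f = f := by
  ext x
  obtain ⟨y, hy⟩ := h ⟨x, rfl⟩
  change q (f x) = f x
  rw [← hy]
  exact DFunLike.congr_fun hq.eq y

end ContinuousLinearMap

theorem projection_onto_range_sub_comp_general
    {H K : Type*}
    [NormedAddCommGroup H] [InnerProductSpace ℂ H] [CompleteSpace H]
    [NormedAddCommGroup K] [InnerProductSpace ℂ K] [CompleteSpace K]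
    (A Ap : H →L[ℂ] H)
    (h1 : A ∘L Ap ∘L A = A)
    (h2 : Ap ∘L A ∘L Ap = Ap)
    (h3 : ContinuousLinearMap.adjoint (A ∘L Ap) = A ∘L Ap)
    (X Y : K →L[ℂ] H)
    (hX : Set.range X ⊆ Set.range A)
    (hXY : (X ∘L ContinuousLinearMap.adjoint Y) ∘L Ap ∘L (X ∘L ContinuousLinearMap.adjoint Y)
      = X ∘L ContinuousLinearMap.adjoint Y)
    (Q : H →L[ℂ] H)
    (hQ1 : Q ∘L Q = Q) (hQ2 : ContinuousLinearMap.adjoint Q = Q)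
    (hQ3 : Set.range Q
      = Set.range ((1 : H →L[ℂ] H) - (X ∘L ContinuousLinearMap.adjoint Y) ∘L Ap)) :
    (A ∘L Ap - 1 + Q) ∘L (A ∘L Ap - 1 + Q) = A ∘L Ap - 1 + Q ∧
      ContinuousLinearMap.adjoint (A ∘L Ap - 1 + Q) = A ∘L Ap - 1 + Q ∧
      Set.range (A ∘L Ap - (1 : H →L[ℂ] H) + Q)
        = Set.range ((A - X ∘L ContinuousLinearMap.adjoint Y) ∘L Ap) := by
  set P := A ∘L Ap
  set E := (X ∘L adjoint Y) ∘L Ap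
  have hP : IsStarProjection P := ⟨congr($h1 ∘L Ap), h3⟩
  have hQ : IsStarProjection Q := ⟨hQ1, hQ2⟩
  have hE : IsIdempotentElem E := congr($hXY ∘L Ap)
  have hEP : E * P = E := congr((X ∘L adjoint Y) ∘L $h2)
  have hPE : P * E = E := by
    refine mul_eq_right_of_range_subset hP.isIdempotentElem ?_
    calc Set.range E ⊆ Set.range X := Set.range_comp_subset_range _ X
      _ ⊆ Set.range A := hX
      _ ⊆ Set.range P := by rintro _ ⟨x, rfl⟩; exact ⟨A x, DFunLike.congr_fun h1 x⟩
  have hQE := mul_eq_right_of_range_subset hQ.isIdempotentElem hQ3.ge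
  have hEQ := mul_eq_right_of_range_subset hE.one_sub hQ3.le
  have hT := hP.sub_one_add hQ hEP hQE
  refine ⟨hT.isIdempotentElem, hT.isSelfAdjoint, ?_⟩
  rw [show (A - X ∘L adjoint Y) ∘L Ap = P - E from sub_comp _ _ _]
  exact Set.range_eq_of_comp_eq
    (congrArg DFunLike.coe (hP.isIdempotentElem.sub_one_add_mul_sub hPE hEP hQE))
    (congrArg DFunLike.coe (hP.sub_mul_sub_one_add hQ hEP hQE hEQ))

/-- If `Q` is the orthogonal projection onto `R(I − XY*A⁺)`, then `A A⁺ − I + Q` is the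
orthogonal projection onto `R((A − XY*)A⁺)`. -/
theorem projection_onto_range_sub_comp
    {H K : Type*}
    [NormedAddCommGroup H] [InnerProductSpace ℂ H] [CompleteSpace H]
    [NormedAddCommGroup K] [InnerProductSpace ℂ K] [CompleteSpace K]
    (A Ap : H →L[ℂ] H)
    (hA : IsClosed (Set.range A))
    (h1 : A ∘L Ap ∘L A = A)
    (h2 : Ap ∘L A ∘L Ap = Ap)
    (h3 : ContinuousLinearMap.adjoint (A ∘L Ap) = A ∘L Ap)
    (h4 : ContinuousLinearMap.adjoint (Ap ∘L A) = Ap ∘L A)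
    (X Y : K →L[ℂ] H)
    (hX : Set.range X ⊆ Set.range A)
    (hY : Set.range Y ⊆ Set.range (ContinuousLinearMap.adjoint A))
    (hXY : (X ∘L ContinuousLinearMap.adjoint Y) ∘L Ap ∘L (X ∘L ContinuousLinearMap.adjoint Y)
      = X ∘L ContinuousLinearMap.adjoint Y)
    (Q : H →L[ℂ] H)
    (hQ1 : Q ∘L Q = Q) (hQ2 : ContinuousLinearMap.adjoint Q = Q)
    (hQ3 : Set.range Q
      = Set.range ((1 : H →L[ℂ] H) - (X ∘L ContinuousLinearMap.adjoint Y) ∘L Ap)) :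
    (A ∘L Ap - 1 + Q) ∘L (A ∘L Ap - 1 + Q) = A ∘L Ap - 1 + Q ∧
      ContinuousLinearMap.adjoint (A ∘L Ap - 1 + Q) = A ∘L Ap - 1 + Q ∧
      Set.range (A ∘L Ap - (1 : H →L[ℂ] H) + Q)
        = Set.range ((A - X ∘L ContinuousLinearMap.adjoint Y) ∘L Ap) :=
  projection_onto_range_sub_comp_general A Ap h1 h2 h3 X Y hX hXY Q hQ1 hQ2 hQ3
end
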